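/- arXiv:1507.05896 — 3 statements merged into one kernel-verified Lean document; each statement's English description precedes it below -/
import Mathlib

section
/- For every integer m ≥ 0, a_{m+2} ≠ 0 and, in the group E(ℚ), the point m•P + Q is the affine point with x-coordinate (a_{m+2}² − a_m·a_{m+4})/a_{m+2}² and y-coordinate (4·a_m·a_{m+2}·a_{m+4} − a_m²·a_{m+6} − a_{m+2}³)/a_{m+2}³. -/
/-- The Somos-5 sequence. -/
def somos : ℕ → ℚ
  | 0 => 1
  | 1 => 1
  | 2 => 1
  | 3 => 1
  | 4 => 1
  | (m + 5) => (somos (m + 4) * somos (m + 1) + somos (m + 3) * somos (m + 2)) / somos m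

/-- The elliptic curve `E : y² + xy = x³ + x² - 2x` over `ℚ`. -/
def E : WeierstrassCurve.Affine ℚ :=
  { a₁ := 1, a₂ := 1, a₃ := 0, a₄ := -2, a₆ := 0 }

/-- The point `P = (2, 2)` on `E`. -/
noncomputable def P : E.Point :=
  WeierstrassCurve.Affine.Point.some (x := 2) (y := 2) (by
    norm_num [WeierstrassCurve.Affine.nonsingular_iff, WeierstrassCurve.Affine.equation_iff, E])

/-- The point `Q = (0, 0)` on `E`. -/
noncomputable def Q : E.Point :=
  WeierstrassCurve.Affine.Point.some (x := 0) (y := 0) (by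
    norm_num [WeierstrassCurve.Affine.nonsingular_iff, WeierstrassCurve.Affine.equation_iff, E])


open WeierstrassCurve.Affine WeierstrassCurve.Affine.Point

theorem somos_pos : ∀ n, 0 < somos n := by
  intro n
  induction n using Nat.strong_induction_on with
  | _ n ih =>
    obtain _|_|_|_|_|m := n
    · norm_num [somos]
    · norm_num [somos]
    · norm_num [somos]
    · norm_num [somos]
    · norm_num [somos]
    · show 0 < somos (m + 5)
      rw [somos]
      exact div_pos (add_pos (mul_pos (ih (m+4) (by omega)) (ih (m+1) (by omega)))
        (mul_pos (ih (m+3) (by omega)) (ih (m+2) (by omega)))) (ih m (by omega))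

theorem K5_step (a b c d e f : ℚ) (ha : a ≠ 0)
    (hf : f = (e * b + d * c) / a)
    (h0 : a ^ 2 * d ^ 2 * e + a * b ^ 2 * e ^ 2 - 5 * a * b * c * d * e + a * c ^ 2 * d ^ 2 + b ^ 2 * c ^ 2 * e + b * c ^ 3 * d = 0) : b ^ 2 * e ^ 2 * f + b * c ^ 2 * f ^ 2 - 5 * b * c * d * e * f + b * d ^ 2 * e ^ 2 + c ^ 2 * d ^ 2 * f + c * d ^ 3 * e = 0 := by
  subst hf
  have key : b ^ 2 * e ^ 2 * ((e  *  b + d  *  c) / a) + b * c ^ 2 * ((e  *  b + d  *  c) / a) ^ 2 - 5 * b * c * d * e * ((e  *  b + d  *  c) / a) + b * d ^ 2 * e ^ 2 + c ^ 2 * d ^ 2 * ((e  *  b + d  *  c) / a) + c * d ^ 3 * e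
      = (b * e + c * d) * (a ^ 2 * d ^ 2 * e + a * b ^ 2 * e ^ 2 - 5 * a * b * c * d * e + a * c ^ 2 * d ^ 2 + b ^ 2 * c ^ 2 * e + b * c ^ 3 * d) / a ^ 2 := by
    field_simp
    ring
  rw [key, h0, mul_zero, zero_div]

theorem somosK5 : ∀ m : ℕ, somos m ^ 2 * somos (m + 3) ^ 2 * somos (m + 4) + somos m * somos (m + 1) ^ 2 * somos (m + 4) ^ 2 - 5 * somos m * somos (m + 1) * somos (m + 2) * somos (m + 3) * somos (m + 4) + somos m * somos (m + 2) ^ 2 * somos (m + 3) ^ 2 + somos (m + 1) ^ 2 * somos (m + 2) ^ 2 * somos (m + 4) + somos (m + 1) * somos (m + 2) ^ 3 * somos (m + 3) = 0 := by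
  intro m
  induction m with
  | zero => norm_num [somos]
  | succ m ih =>
    have hf : somos (m + 5)
        = (somos (m + 4) * somos (m + 1) + somos (m + 3) * somos (m + 2)) / somos m := by
      rw [somos]
    simp only [show m+1+1 = m+2 from rfl, show m+1+2 = m+3 from rfl,
      show m+1+3 = m+4 from rfl, show m+1+4 = m+5 from rfl]
    exact K5_step (somos m) (somos (m+1)) (somos (m+2)) (somos (m+3)) (somos (m+4))
      (somos (m+5)) (somos_pos m).ne' hf ih

theorem x_ne_two (a c e : ℚ) (ha : 0 < a) (hc : 0 < c) (he : 0 < e) :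
    (c ^ 2 - a * e) / c ^ 2 ≠ 2 := by
  have h1 : (c ^ 2 - a * e) / c ^ 2 < 2 := by
    rw [div_lt_iff₀ (by positivity)]
    nlinarith
  exact h1.ne

theorem hP22 : E.Nonsingular 2 2 := by
  norm_num [WeierstrassCurve.Affine.nonsingular_iff, WeierstrassCurve.Affine.equation_iff, E]

theorem hDelta : E.Δ ≠ 0 := by
  norm_num [WeierstrassCurve.Δ, WeierstrassCurve.b₂, WeierstrassCurve.b₄, WeierstrassCurve.b₆,
    WeierstrassCurve.b₈, E]

set_option maxHeartbeats 1000000 in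
theorem eqn_lemma (a b c d e f g : ℚ) (ha : 0 < a) (hb : 0 < b) (hc : 0 < c) (hd : 0 < d)
    (he : 0 < e)
    (hf : f = (e * b + d * c) / a) (hg : g = (f * c + e * d) / b)
    (h0 : a ^ 2 * d ^ 2 * e + a * b ^ 2 * e ^ 2 - 5 * a * b * c * d * e + a * c ^ 2 * d ^ 2 + b ^ 2 * c ^ 2 * e + b * c ^ 3 * d = 0) :
    E.Equation ((c ^ 2 - a * e) / c ^ 2) ((4 * a * c * e - a ^ 2 * g - c ^ 3) / c ^ 3) := by
  have ha' := ha.ne'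
  have hb' := hb.ne'
  have hc' := hc.ne'
  have hd' := hd.ne'
  have he' := he.ne'
  subst hg
  subst hf
  rw [WeierstrassCurve.Affine.equation_iff, ← sub_eq_zero]
  have key : a * (a * e + c ^ 2) * (a ^ 2 * d ^ 2 * e + a * b ^ 2 * e ^ 2 - 5 * a * b * c * d * e + a * c ^ 2 * d ^ 2 + b ^ 2 * c ^ 2 * e + b * c ^ 3 * d) / (b ^ 2 * c ^ 6) = (0 : ℚ) := by
    rw [h0, mul_zero, zero_div]
  refine Eq.trans ?_ key
  simp only [E]
  field_simp
  ring

set_option maxHeartbeats 2000000 in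
theorem addx_lemma (a b c d e f g : ℚ) (ha : 0 < a) (hb : 0 < b) (hc : 0 < c) (hd : 0 < d)
    (he : 0 < e)
    (hf : f = (e * b + d * c) / a) (hg : g = (f * c + e * d) / b)
    (h0 : a ^ 2 * d ^ 2 * e + a * b ^ 2 * e ^ 2 - 5 * a * b * c * d * e + a * c ^ 2 * d ^ 2 + b ^ 2 * c ^ 2 * e + b * c ^ 3 * d = 0) :
    E.addX ((c ^ 2 - a * e) / c ^ 2) 2
      (E.slope ((c ^ 2 - a * e) / c ^ 2) 2 ((4 * a * c * e - a ^ 2 * g - c ^ 3) / c ^ 3) 2)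
      = (d ^ 2 - b * f) / d ^ 2 := by
  have ha' := ha.ne'
  have hb' := hb.ne'
  have hc' := hc.ne'
  have hd' := hd.ne'
  have he' := he.ne'
  have hae : a * e + c ^ 2 ≠ 0 := by positivity
  have hx2ne : (c ^ 2 - a * e) / c ^ 2 - 2 ≠ 0 :=
    sub_ne_zero.mpr (x_ne_two a c e ha hc he)
  have hsl : ((4 * a * c * e - a ^ 2 * g - c ^ 3) / c ^ 3 - 2) / ((c ^ 2 - a * e) / c ^ 2 - 2)
      = (a ^ 2 * g + 3 * c ^ 3 - 4 * a * c * e) / (c * (a * e + c ^ 2)) := by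
    rw [div_eq_div_iff hx2ne (mul_ne_zero hc' hae)]
    field_simp
    ring
  rw [WeierstrassCurve.Affine.slope_of_X_ne (x_ne_two a c e ha hc he), hsl, ← sub_eq_zero]
  subst hg
  subst hf
  have key : (a ^ 4 * d ^ 2 * e ^ 2 + 2 * a ^ 3 * c ^ 2 * d ^ 2 * e + a ^ 2 * b ^ 2 * c ^ 2 * e ^ 2 + 6 * a ^ 2 * b * c ^ 3 * d * e + a ^ 2 * c ^ 4 * d ^ 2 + 2 * a * b ^ 2 * c ^ 4 * e + 6 * a * b * c ^ 5 * d + b ^ 2 * c ^ 6) * (a ^ 2 * d ^ 2 * e + a * b ^ 2 * e ^ 2 - 5 * a * b * c * d * e + a * c ^ 2 * d ^ 2 + b ^ 2 * c ^ 2 * e + b * c ^ 3 * d)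
      / (a * b ^ 2 * c ^ 2 * d ^ 2 * (a * e + c ^ 2) ^ 3) = (0 : ℚ) := by
    rw [h0, mul_zero, zero_div]
  refine Eq.trans ?_ key
  simp only [WeierstrassCurve.Affine.addX, E]
  field_simp
  ring

set_option maxHeartbeats 4000000 in
theorem addy_lemma (a b c d e f g h : ℚ) (ha : 0 < a) (hb : 0 < b) (hc : 0 < c) (hd : 0 < d)
    (he : 0 < e)
    (hf : f = (e * b + d * c) / a) (hg : g = (f * c + e * d) / b) (hh : h = (g * d + f * e) / c)
    (h0 : a ^ 2 * d ^ 2 * e + a * b ^ 2 * e ^ 2 - 5 * a * b * c * d * e + a * c ^ 2 * d ^ 2 + b ^ 2 * c ^ 2 * e + b * c ^ 3 * d = 0) :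
    E.addY ((c ^ 2 - a * e) / c ^ 2) 2 ((4 * a * c * e - a ^ 2 * g - c ^ 3) / c ^ 3)
      (E.slope ((c ^ 2 - a * e) / c ^ 2) 2 ((4 * a * c * e - a ^ 2 * g - c ^ 3) / c ^ 3) 2)
      = (4 * b * d * f - b ^ 2 * h - d ^ 3) / d ^ 3 := by
  have ha' := ha.ne'
  have hb' := hb.ne'
  have hc' := hc.ne'
  have hd' := hd.ne'
  have he' := he.ne'
  have hae : a * e + c ^ 2 ≠ 0 := by positivity
  have hx2ne : (c ^ 2 - a * e) / c ^ 2 - 2 ≠ 0 :=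
    sub_ne_zero.mpr (x_ne_two a c e ha hc he)
  have hsl : ((4 * a * c * e - a ^ 2 * g - c ^ 3) / c ^ 3 - 2) / ((c ^ 2 - a * e) / c ^ 2 - 2)
      = (a ^ 2 * g + 3 * c ^ 3 - 4 * a * c * e) / (c * (a * e + c ^ 2)) := by
    rw [div_eq_div_iff hx2ne (mul_ne_zero hc' hae)]
    field_simp
    ring
  rw [WeierstrassCurve.Affine.slope_of_X_ne (x_ne_two a c e ha hc he), hsl, ← sub_eq_zero]
  subst hh
  subst hg
  subst hf
  have key : (-(a ^ 9 * d ^ 4 * e ^ 6) + 2 * a ^ 8 * b * c * d ^ 3 * e ^ 6 - 6 * a ^ 8 * c ^ 2 * d ^ 4 * e ^ 5 - 15 * a ^ 7 * c ^ 4 * d ^ 4 * e ^ 4 + a ^ 6 * b ^ 4 * c ^ 2 * e ^ 7 + 3 * a ^ 6 * b ^ 3 * c ^ 3 * d * e ^ 6 + 12 * a ^ 6 * b ^ 2 * c ^ 4 * d ^ 2 * e ^ 5 - 30 * a ^ 6 * b * c ^ 5 * d ^ 3 * e ^ 4 - 20 * a ^ 6 * c ^ 6 * d ^ 4 * e ^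 3 + 6 * a ^ 5 * b ^ 4 * c ^ 4 * e ^ 6 + 12 * a ^ 5 * b ^ 3 * c ^ 5 * d * e ^ 5 + 24 * a ^ 5 * b ^ 2 * c ^ 6 * d ^ 2 * e ^ 4 - 80 * a ^ 5 * b * c ^ 7 * d ^ 3 * e ^ 3 - 15 * a ^ 5 * c ^ 8 * d ^ 4 * e ^ 2 + 15 * a ^ 4 * b ^ 4 * c ^ 6 * e ^ 5 + 15 * a ^ 4 * b ^ 3 * c ^ 7 * d * e ^ 4 - 24 * a ^ 4 * b ^ 2 * c ^ 8 * d ^ 2 * e ^ 3 - 90 * a ^ 4 * b * c ^ 9 * d ^ 3 * e ^ 2 - 6 * a ^ 4 * c ^ 10 * d ^ 4 * e + 20 * a ^ 3 * b ^ 4 * c ^ 8 * e ^ 4 - 96 * a ^ 3 * b ^ 2 * c ^ 10 * d ^ 2 * e ^ 2 - 48 * a ^ 3 * b * c ^ 11 * d ^ 3 * e - a ^ 3 * c ^ 12 * d ^ 4 + 15 * a ^ 2 * b ^ 4 * c ^ 10 * e ^ 3 - 15 * a ^ 2 * b ^ 3 * c ^ 11 * d * e ^ 2 - 84 * a ^ 2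 * b ^ 2 * c ^ 12 * d ^ 2 * e - 10 * a ^ 2 * b * c ^ 13 * d ^ 3 + 6 * a * b ^ 4 * c ^ 12 * e ^ 2 - 12 * a * b ^ 3 * c ^ 13 * d * e - 24 * a * b ^ 2 * c ^ 14 * d ^ 2 + b ^ 4 * c ^ 14 * e - 3 * b ^ 3 * c ^ 15 * d) * (a ^ 2 * d ^ 2 * e + a * b ^ 2 * e ^ 2 - 5 * a * b * c * d * e + a * c ^ 2 * d ^ 2 + b ^ 2 * c ^ 2 * e + b * c ^ 3 * d)
      / (a * b ^ 3 * c ^ 3 * d ^ 3 * (a * e + c ^ 2) ^ 7) = (0 : ℚ) := by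
    rw [h0, mul_zero, zero_div]
  refine Eq.trans ?_ key
  simp only [WeierstrassCurve.Affine.addY, WeierstrassCurve.Affine.negAddY,
    WeierstrassCurve.Affine.addX, WeierstrassCurve.Affine.negY, E]
  field_simp
  ring

theorem some_eq_some {x₁ y₁ x₂ y₂ : ℚ} {h₁ : E.Nonsingular x₁ y₁} {h₂ : E.Nonsingular x₂ y₂}
    (hx : x₁ = x₂) (hy : y₁ = y₂) :
    WeierstrassCurve.Affine.Point.some _ _ h₁ = WeierstrassCurve.Affine.Point.some _ _ h₂ := by
  subst hx
  subst hy
  rfl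

theorem somos5_point_formula (m : ℕ) :
    somos (m + 2) ≠ 0 ∧
    ∃ h : E.Nonsingular
        ((somos (m + 2) ^ 2 - somos m * somos (m + 4)) / somos (m + 2) ^ 2)
        ((4 * somos m * somos (m + 2) * somos (m + 4) - somos m ^ 2 * somos (m + 6)
            - somos (m + 2) ^ 3) / somos (m + 2) ^ 3),
      m • P + Q = WeierstrassCurve.Affine.Point.some _ _ h := by
  induction m with
  | zero =>
    have h5 : somos 5 = 2 := by
      rw [show (5:ℕ) = 0 + 5 from rfl, somos]; norm_num [somos]
    have h6 : somos 6 = 3 := by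
      rw [show (6:ℕ) = 1 + 5 from rfl, somos]; norm_num [somos, h5]
    have hs0 : somos 0 = 1 := by norm_num [somos]
    have hs2 : somos 2 = 1 := by norm_num [somos]
    have hs4 : somos 4 = 1 := by norm_num [somos]
    have hX0 : (somos 2 ^ 2 - somos 0 * somos 4) / somos 2 ^ 2 = (0:ℚ) := by
      rw [hs0, hs2, hs4]; norm_num
    have hY0 : (4 * somos 0 * somos 2 * somos 4 - somos 0 ^ 2 * somos 6 - somos 2 ^ 3)
        / somos 2 ^ 3 = (0:ℚ) := by
      rw [hs0, hs2, hs4, h6]; norm_num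
    have hQns : E.Nonsingular 0 0 := by
      norm_num [WeierstrassCurve.Affine.nonsingular_iff, WeierstrassCurve.Affine.equation_iff, E]
    have hns0 : E.Nonsingular ((somos 2 ^ 2 - somos 0 * somos 4) / somos 2 ^ 2)
        ((4 * somos 0 * somos 2 * somos 4 - somos 0 ^ 2 * somos 6 - somos 2 ^ 3)
          / somos 2 ^ 3) := by
      rw [hX0, hY0]; exact hQns
    refine ⟨by norm_num [somos], hns0, ?_⟩
    rw [zero_nsmul, zero_add]
    exact some_eq_some hX0.symm hY0.symm
  | succ m ih =>
    obtain ⟨-, hns, heq⟩ := ih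
    have p0 := somos_pos m
    have p1 := somos_pos (m+1)
    have p2 := somos_pos (m+2)
    have p3 := somos_pos (m+3)
    have p4 := somos_pos (m+4)
    have p5 := somos_pos (m+5)
    have hf : somos (m + 5)
        = (somos (m + 4) * somos (m + 1) + somos (m + 3) * somos (m + 2)) / somos m := by
      rw [somos]
    have hg : somos (m + 6)
        = (somos (m + 5) * somos (m + 2) + somos (m + 4) * somos (m + 3)) / somos (m + 1) := by
      rw [show m + 6 = (m + 1) + 5 from rfl, somos]
    have hh : somos (m + 7)
        = (somos (m + 6) * somos (m + 3) + somos (m + 5) * somos (m + 4)) / somos (m + 2) := by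
      rw [show m + 7 = (m + 2) + 5 from rfl, somos]
    have hk0 := somosK5 m
    have hk1 := somosK5 (m+1)
    simp only [show m+1+1 = m+2 from rfl, show m+1+2 = m+3 from rfl,
      show m+1+3 = m+4 from rfl, show m+1+4 = m+5 from rfl, show m+1+5 = m+6 from rfl,
      show m+1+6 = m+7 from rfl] at hk1 ⊢
    have hEq2 : E.Equation ((somos (m+3) ^ 2 - somos (m+1) * somos (m+5)) / somos (m+3) ^ 2)
        ((4 * somos (m+1) * somos (m+3) * somos (m+5) - somos (m+1) ^ 2 * somos (m+7)
          - somos (m+3) ^ 3) / somos (m+3) ^ 3) :=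
      eqn_lemma (somos (m+1)) (somos (m+2)) (somos (m+3)) (somos (m+4)) (somos (m+5))
        (somos (m+6)) (somos (m+7)) p1 p2 p3 p4 p5 hg hh hk1
    refine ⟨p3.ne', (E.equation_iff_nonsingular_of_Δ_ne_zero hDelta).mp hEq2, ?_⟩
    rw [succ_nsmul, add_right_comm, heq, show P = WeierstrassCurve.Affine.Point.some _ _ hP22
      from rfl, WeierstrassCurve.Affine.Point.add_of_X_ne (x_ne_two (somos m) (somos (m+2))
      (somos (m+4)) p0 p2 p4)]
    exact some_eq_some
      (addx_lemma (somos m) (somos (m+1)) (somos (m+2)) (somos (m+3)) (somos (m+4))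
        (somos (m+5)) (somos (m+6)) p0 p1 p2 p3 p4 hf hg hk0)
      (addy_lemma (somos m) (somos (m+1)) (somos (m+2)) (somos (m+3)) (somos (m+4))
        (somos (m+5)) (somos (m+6)) (somos (m+7)) p0 p1 p2 p3 p4 hf hg hh hk0)
end

section
/- Let k ≥ 3 and let g be an element of I_k written as the 3×3 matrix [[a,b,0],[c,d,0],[e,f,1]] over ℤ/2^kℤ. If e ≡ f ≡ 0 (mod 4) and [[a,b],[c,d]] ≡ I (mod 8), then g lies in the Frattini subgroup Φ(I_k) of I_k. -/
/-- The matrix `[[1,1],[0,1]]` as an element of `GL₂(ℤ/8ℤ)`. -/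
def u1 : GL (Fin 2) (ZMod 8) := ⟨!![1,1;0,1], !![1,7;0,1], by decide, by decide⟩

/-- The matrix `[[7,0],[2,1]]` as an element of `GL₂(ℤ/8ℤ)`. -/
def u2 : GL (Fin 2) (ZMod 8) := ⟨!![7,0;2,1], !![7,0;2,1], by decide, by decide⟩

/-- The matrix `[[5,0],[2,1]]` as an element of `GL₂(ℤ/8ℤ)`. -/
def u3 : GL (Fin 2) (ZMod 8) := ⟨!![5,0;2,1], !![5,0;6,1], by decide, by decide⟩

/-- The subgroup `H` of `GL₂(ℤ/8ℤ)` generated by `[[1,1],[0,1]]`, `[[7,0],[2,1]]`,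
`[[5,0],[2,1]]`. -/
def H : Subgroup (GL (Fin 2) (ZMod 8)) := Subgroup.closure {u1, u2, u3}

/-- The defining predicate of the group `I_k ≤ GL₃(ℤ/2^kℤ)`: the matrix has the form
`[[a,b,0],[c,d,0],[e,f,1]]`, the reduction mod 8 of `[[a,b],[c,d]]` lies in `H`, and
`e` is even if and only if `ad - bc ≡ 1, 7 (mod 8)`. -/
def IkPred (k : ℕ) (g : GL (Fin 3) (ZMod (2 ^ k))) : Prop :=
  (g : Matrix (Fin 3) (Fin 3) (ZMod (2 ^ k))) 0 2 = 0 ∧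
  (g : Matrix (Fin 3) (Fin 3) (ZMod (2 ^ k))) 1 2 = 0 ∧
  (g : Matrix (Fin 3) (Fin 3) (ZMod (2 ^ k))) 2 2 = 1 ∧
  (∃ h ∈ H, ∀ i j : Fin 2,
    (h : Matrix (Fin 2) (Fin 2) (ZMod 8)) i j
      = (((g : Matrix (Fin 3) (Fin 3) (ZMod (2 ^ k))) i.castSucc j.castSucc).val : ZMod 8)) ∧
  ((2 : ZMod (2 ^ k)) ∣ (g : Matrix (Fin 3) (Fin 3) (ZMod (2 ^ k))) 2 0 ↔
    ((((g : Matrix (Fin 3) (Fin 3) (ZMod (2 ^ k))) 0 0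
        * (g : Matrix (Fin 3) (Fin 3) (ZMod (2 ^ k))) 1 1
        - (g : Matrix (Fin 3) (Fin 3) (ZMod (2 ^ k))) 0 1
        * (g : Matrix (Fin 3) (Fin 3) (ZMod (2 ^ k))) 1 0).val : ZMod 8)
      ∈ ({1, 7} : Set (ZMod 8))))

def blkM {R : Type*} [CommRing R] (A : Matrix (Fin 2) (Fin 2) R) (e f : R) :
    Matrix (Fin 3) (Fin 3) R :=
  !![A 0 0, A 0 1, 0; A 1 0, A 1 1, 0; e, f, 1]

theorem blkM_mul {R : Type*} [CommRing R] (A B : Matrix (Fin 2) (Fin 2) R) (e f e' f' : R) :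
    blkM A e f * blkM B e' f' =
      blkM (A * B) (e * B 0 0 + f * B 1 0 + e') (e * B 0 1 + f * B 1 1 + f') := by
  ext i j
  fin_cases i <;> fin_cases j <;>
    simp [blkM, Matrix.mul_apply, Fin.sum_univ_three, Fin.sum_univ_two,
      Matrix.vecHead, Matrix.vecTail]

theorem blkM_one {R : Type*} [CommRing R] : blkM (1 : Matrix (Fin 2) (Fin 2) R) 0 0 = 1 := by
  ext i j
  fin_cases i <;> fin_cases j <;>
    simp [blkM, Matrix.one_apply, Matrix.vecHead, Matrix.vecTail]


section
variable {R : Type*} [CommRing R]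

private theorem entry_eq {M N : Matrix (Fin 2) (Fin 2) R} (h : M = N) (i j : Fin 2) :
    M i j = N i j := by rw [h]

def blkGL (A : GL (Fin 2) R) (e f : R) : GL (Fin 3) R :=
  let Ai : Matrix (Fin 2) (Fin 2) R := ((A⁻¹ : GL (Fin 2) R) : Matrix (Fin 2) (Fin 2) R)
  { val := blkM ((A : GL (Fin 2) R) : Matrix (Fin 2) (Fin 2) R) e f
    inv := blkM Ai (-(e * Ai 0 0 + f * Ai 1 0)) (-(e * Ai 0 1 + f * Ai 1 1))
    val_inv := by
      have h : ((A : GL (Fin 2) R) : Matrix (Fin 2) (Fin 2) R) * Ai = 1 := by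
        show ((A : GL (Fin 2) R) : Matrix (Fin 2) (Fin 2) R)
          * ((A⁻¹ : GL (Fin 2) R) : Matrix (Fin 2) (Fin 2) R) = 1
        rw [← Units.val_mul, mul_inv_cancel, Units.val_one]
      rw [blkM_mul, h, ← blkM_one]
      congr 1 <;> ring
    inv_val := by
      have h : Ai * ((A : GL (Fin 2) R) : Matrix (Fin 2) (Fin 2) R) = 1 := by
        show ((A⁻¹ : GL (Fin 2) R) : Matrix (Fin 2) (Fin 2) R)
          * ((A : GL (Fin 2) R) : Matrix (Fin 2) (Fin 2) R) = 1
        rw [← Units.val_mul, inv_mul_cancel, Units.val_one]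
      have h00 := entry_eq h 0 0
      have h01 := entry_eq h 0 1
      have h10 := entry_eq h 1 0
      have h11 := entry_eq h 1 1
      simp [Matrix.mul_apply, Fin.sum_univ_two, Matrix.one_apply] at h00 h01 h10 h11
      rw [blkM_mul, h]
      have e1 : -(e * Ai 0 0 + f * Ai 1 0) * ((A : GL (Fin 2) R) : Matrix (Fin 2) (Fin 2) R) 0 0
          + -(e * Ai 0 1 + f * Ai 1 1) * ((A : GL (Fin 2) R) : Matrix (Fin 2) (Fin 2) R) 1 0
          + e = 0 := by linear_combination (-e) * h00 - f * h10
      have e2 : -(e * Ai 0 0 + f * Ai 1 0) * ((A : GL (Fin 2) R) : Matrix (Fin 2) (Fin 2) R) 0 1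
          + -(e * Ai 0 1 + f * Ai 1 1) * ((A : GL (Fin 2) R) : Matrix (Fin 2) (Fin 2) R) 1 1
          + f = 0 := by linear_combination (-e) * h01 - f * h11
      rw [e1, e2, blkM_one] }

@[simp] theorem blkGL_val (A : GL (Fin 2) R) (e f : R) :
    ((blkGL A e f : GL (Fin 3) R) : Matrix (Fin 3) (Fin 3) R)
      = blkM ((A : GL (Fin 2) R) : Matrix (Fin 2) (Fin 2) R) e f := rfl

theorem blkGL_mul (A B : GL (Fin 2) R) (e f e' f' : R) :
    blkGL A e f * blkGL B e' f' =
      blkGL (A * B) (e * ((B : GL (Fin 2) R) : Matrix (Fin 2) (Fin 2) R) 0 0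
        + f * ((B : GL (Fin 2) R) : Matrix (Fin 2) (Fin 2) R) 1 0 + e')
        (e * ((B : GL (Fin 2) R) : Matrix (Fin 2) (Fin 2) R) 0 1
        + f * ((B : GL (Fin 2) R) : Matrix (Fin 2) (Fin 2) R) 1 1 + f') := by
  apply Units.ext
  rw [Units.val_mul, blkGL_val, blkGL_val, blkGL_val, blkM_mul, Units.val_mul]

theorem blkGL_one : blkGL (1 : GL (Fin 2) R) 0 0 = 1 := by
  apply Units.ext
  rw [blkGL_val, Units.val_one, Units.val_one, blkM_one]

theorem blkGL_mul₀ (A B : GL (Fin 2) R) :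
    blkGL A 0 0 * blkGL B 0 0 = blkGL (A * B) 0 0 := by
  rw [blkGL_mul]; congr 1 <;> ring

theorem blkGL_transl_mul (A : GL (Fin 2) R) (e f e' f' : R) :
    blkGL A e f * blkGL 1 e' f' = blkGL A (e + e') (f + f') := by
  rw [blkGL_mul, mul_one]
  have h0 : ((1 : GL (Fin 2) R) : Matrix (Fin 2) (Fin 2) R) = 1 := rfl
  rw [h0]
  congr 1 <;> simp [Matrix.one_apply] <;> ring

theorem blkGL_transl_sq (e f : R) :
    blkGL (1 : GL (Fin 2) R) e f * blkGL 1 e f = blkGL 1 (2 * e) (2 * f) := by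
  rw [blkGL_transl_mul]
  congr 1 <;> ring

theorem blkGL_pow (A : GL (Fin 2) R) (e f : R) (n : ℕ) :
    ∃ e' f', (blkGL A e f) ^ n = blkGL (A ^ n) e' f' := by
  induction n with
  | zero => exact ⟨0, 0, by rw [pow_zero, pow_zero, blkGL_one]⟩
  | succ n ih =>
    obtain ⟨e', f', hef⟩ := ih
    exact ⟨_, _, by rw [pow_succ, hef, blkGL_mul, ← pow_succ]⟩

theorem blkGL_one_pow (e f : R) (n : ℕ) :
    (blkGL (1 : GL (Fin 2) R) e f) ^ n = blkGL 1 ((n : R) * e) ((n : R) * f) := by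
  induction n with
  | zero => rw [pow_zero, Nat.cast_zero, zero_mul, zero_mul, blkGL_one]
  | succ n ih =>
    rw [pow_succ, ih, blkGL_transl_mul]
    congr 1 <;> push_cast <;> ring
end

theorem blkM_castSucc {R : Type*} [CommRing R] (A : Matrix (Fin 2) (Fin 2) R) (e f : R)
    (i j : Fin 2) : blkM A e f i.castSucc j.castSucc = A i j := by
  fin_cases i <;> fin_cases j <;> simp [blkM, Matrix.vecHead, Matrix.vecTail]

section
variable {R : Type*} [CommRing R]
theorem repr_blk (x : GL (Fin 3) R)
    (h02 : (x : Matrix (Fin 3) (Fin 3) R) 0 2 = 0)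
    (h12 : (x : Matrix (Fin 3) (Fin 3) R) 1 2 = 0)
    (h22 : (x : Matrix (Fin 3) (Fin 3) R) 2 2 = 1) :
    ∃ (A : GL (Fin 2) R) (e f : R),
      (x : Matrix (Fin 3) (Fin 3) R) = blkM ((A : GL (Fin 2) R) : Matrix (Fin 2) (Fin 2) R) e f
      ∧ ((A : GL (Fin 2) R) : Matrix (Fin 2) (Fin 2) R)
          = !![(x : Matrix (Fin 3) (Fin 3) R) 0 0, (x : Matrix (Fin 3) (Fin 3) R) 0 1;
               (x : Matrix (Fin 3) (Fin 3) R) 1 0, (x : Matrix (Fin 3) (Fin 3) R) 1 1] := by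
  set m : Matrix (Fin 3) (Fin 3) R := (x : Matrix (Fin 3) (Fin 3) R) with hm
  have hdet3 : m.det = (!![m 0 0, m 0 1; m 1 0, m 1 1] : Matrix (Fin 2) (Fin 2) R).det := by
    rw [Matrix.det_fin_three, Matrix.det_fin_two_of, h02, h12, h22]
    ring
  have hu : IsUnit m.det := by
    apply (Matrix.isUnit_iff_isUnit_det m).mp
    exact x.isUnit
  rw [hdet3] at hu
  refine ⟨Matrix.GeneralLinearGroup.mk'' _ hu, m 2 0, m 2 1, ?_, rfl⟩
  have hAm : ((Matrix.GeneralLinearGroup.mk'' (!![m 0 0, m 0 1; m 1 0, m 1 1]) hu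
      : GL (Fin 2) R) : Matrix (Fin 2) (Fin 2) R) = !![m 0 0, m 0 1; m 1 0, m 1 1] := rfl
  rw [hAm]
  ext i j
  fin_cases i <;> fin_cases j <;>
    simp [blkM, Matrix.vecHead, Matrix.vecTail, h02, h12, h22]
end

section
variable {k : ℕ}

theorem dvd8 (hk : 3 ≤ k) : (8 : ℕ) ∣ 2 ^ k := by
  have : (8:ℕ) = 2 ^ 3 := by norm_num
  rw [this]
  exact pow_dvd_pow 2 hk

theorem dvd2 (hk : 3 ≤ k) : (2 : ℕ) ∣ 2 ^ k := by
  have : (2:ℕ) = 2 ^ 1 := by norm_num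
  rw [this]
  exact pow_dvd_pow 2 (by omega)

theorem val_cast8 (hk : 3 ≤ k) (x : ZMod (2^k)) :
    ((x.val : ZMod 8)) = ZMod.castHom (dvd8 hk) (ZMod 8) x := by
  haveI : NeZero (2^k) := NeZero.of_pos (Nat.two_pow_pos k)
  rw [ZMod.castHom_apply, ZMod.natCast_val]

theorem self_eq_cast_val (hk : 3 ≤ k) (x : ZMod (2^k)) : ((x.val : ℕ) : ZMod (2^k)) = x := by
  haveI : NeZero (2^k) := NeZero.of_pos (Nat.two_pow_pos k)
  rw [ZMod.natCast_val, ZMod.cast_id]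

theorem eight_dvd_of_cast8_eq_zero (hk : 3 ≤ k) (x : ZMod (2^k))
    (h : ZMod.castHom (dvd8 hk) (ZMod 8) x = 0) : ∃ y, x = 8 * y := by
  rw [← val_cast8 hk] at h
  obtain ⟨m, hm⟩ := (ZMod.natCast_eq_zero_iff x.val 8).mp h
  refine ⟨((m : ℕ) : ZMod (2^k)), ?_⟩
  rw [← self_eq_cast_val hk x, hm]
  push_cast
  ring

theorem two_dvd_of_cast2_eq_zero (hk : 3 ≤ k) (x : ZMod (2^k))
    (h : ZMod.castHom (dvd2 hk) (ZMod 2) x = 0) : ∃ y, x = 2 * y := by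
  haveI : NeZero (2^k) := NeZero.of_pos (Nat.two_pow_pos k)
  rw [ZMod.castHom_apply, ← ZMod.natCast_val] at h
  obtain ⟨m, hm⟩ := (ZMod.natCast_eq_zero_iff x.val 2).mp h
  refine ⟨((m : ℕ) : ZMod (2^k)), ?_⟩
  rw [← self_eq_cast_val hk x, hm]
  push_cast
  ring

theorem two_pow_eq_zero (hm : k ≤ m) : ((2 : ZMod (2^k)) ^ m) = 0 := by
  have : ((2 : ZMod (2^k)) ^ m) = ((2 ^ m : ℕ) : ZMod (2^k)) := by push_cast; ring
  rw [this, ZMod.natCast_eq_zero_iff]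
  exact pow_dvd_pow 2 hm

theorem isUnit_one_add_two_mul (x : ZMod (2^k)) : IsUnit (1 + 2 * x) := by
  have h2 : IsNilpotent (2 : ZMod (2^k)) := ⟨k, two_pow_eq_zero le_rfl⟩
  exact IsNilpotent.isUnit_one_add ((Commute.all (2 : ZMod (2^k)) x).isNilpotent_mul_right h2)

end

theorem u1_mem : u1 ∈ H := Subgroup.subset_closure (by simp)
theorem u2_mem : u2 ∈ H := Subgroup.subset_closure (by simp)
theorem u3_mem : u3 ∈ H := Subgroup.subset_closure (by simp)

-- test value computation
example : ((u1 * u1 * u2 * u1 * u1 * u2 : GL (Fin 2) (ZMod 8)) : Matrix (Fin 2) (Fin 2) (ZMod 8))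
    = !![5,0;0,5] := by
  show (!![1,1;0,1] * !![1,1;0,1] * !![7,0;2,1] * !![1,1;0,1] * !![1,1;0,1] * !![7,0;2,1]
    : Matrix (Fin 2) (Fin 2) (ZMod 8)) = !![5,0;0,5]
  decide

theorem H8 (a b c : ZMod 8) :
    ∃ h ∈ H, ((h : GL (Fin 2) (ZMod 8)) : Matrix (Fin 2) (Fin 2) (ZMod 8))
      = !![1 + 4*a, 4*b; 4*c, 1 + 4*a] := by
  have ha : 4*a = 0 ∨ 4*a = 4 := by revert a; decide
  have hb : 4*b = 0 ∨ 4*b = 4 := by revert b; decide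
  have hc : 4*c = 0 ∨ 4*c = 4 := by revert c; decide
  have m1 : u1 * u1 * u1 * u1 ∈ H := by
    exact H.mul_mem (H.mul_mem (H.mul_mem u1_mem u1_mem) u1_mem) u1_mem
  have m3 : u3 * u3 ∈ H := H.mul_mem u3_mem u3_mem
  have mE : u1 * u1 * u2 * u1 * u1 * u2 ∈ H := by
    exact H.mul_mem (H.mul_mem (H.mul_mem (H.mul_mem (H.mul_mem u1_mem u1_mem) u2_mem) u1_mem)
      u1_mem) u2_mem
  rcases ha with ha | ha <;> rcases hb with hb | hb <;> rcases hc with hc | hc <;>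
      rw [ha, hb, hc]
  · exact ⟨1, H.one_mem, by decide⟩
  · exact ⟨u3 * u3, m3, by decide⟩
  · exact ⟨u1 * u1 * u1 * u1, m1, by decide⟩
  · exact ⟨u1 * u1 * u1 * u1 * (u3 * u3), H.mul_mem m1 m3, by decide⟩
  · exact ⟨u1 * u1 * u2 * u1 * u1 * u2, mE, by decide⟩
  · exact ⟨u1 * u1 * u2 * u1 * u1 * u2 * (u3 * u3), H.mul_mem mE m3, by decide⟩
  · exact ⟨u1 * u1 * u2 * u1 * u1 * u2 * (u1 * u1 * u1 * u1), H.mul_mem mE m1, by decide⟩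
  · exact ⟨u1 * u1 * u2 * u1 * u1 * u2 * (u1 * u1 * u1 * u1) * (u3 * u3),
      H.mul_mem (H.mul_mem mE m1) m3, by decide⟩

theorem Hc0 : ∃ h ∈ H, ((h : GL (Fin 2) (ZMod 8)) : Matrix (Fin 2) (Fin 2) (ZMod 8))
    = !![3, 0; 4, 1] := ⟨u2 * u3, H.mul_mem u2_mem u3_mem, by decide⟩

def c82 : ZMod 8 →+* ZMod 2 := ZMod.castHom (show (2:ℕ) ∣ 8 by norm_num) (ZMod 2)

theorem H_mod2 (h : GL (Fin 2) (ZMod 8)) (hh : h ∈ H) :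
    ((h : GL (Fin 2) (ZMod 8)) : Matrix (Fin 2) (Fin 2) (ZMod 8)).map c82 = 1 ∨
    ((h : GL (Fin 2) (ZMod 8)) : Matrix (Fin 2) (Fin 2) (ZMod 8)).map c82 = !![1,1;0,1] := by
  induction hh using Subgroup.closure_induction with
  | mem x hx =>
    rcases hx with rfl | rfl | rfl
    · right
      ext i j
      fin_cases i <;> fin_cases j <;> simp [u1, c82, Matrix.map] <;> decide
    · left
      ext i j
      fin_cases i <;> fin_cases j <;> simp [u2, c82, Matrix.map] <;> decide
    · left
      ext i j
      fin_cases i <;> fin_cases j <;> simp [u3, c82, Matrix.map] <;> decide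
  | one =>
    left
    ext i j
    fin_cases i <;> fin_cases j <;> simp [Matrix.map, Matrix.one_apply] <;> decide
  | mul x y hx hy ihx ihy =>
    have hmul : ((x*y : GL (Fin 2) (ZMod 8)) : Matrix (Fin 2) (Fin 2) (ZMod 8)).map c82
        = ((x : GL (Fin 2) (ZMod 8)) : Matrix (Fin 2) (Fin 2) (ZMod 8)).map c82
          * ((y : GL (Fin 2) (ZMod 8)) : Matrix (Fin 2) (Fin 2) (ZMod 8)).map c82 := by
      rw [Units.val_mul, Matrix.map_mul]
    rcases ihx with h1 | h1 <;> rcases ihy with h2 | h2 <;> rw [hmul, h1, h2]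
    · left; rw [one_mul]
    · right; rw [one_mul]
    · right; rw [mul_one]
    · left; decide
  | inv x hx ihx =>
    have hkey : ∀ M : Matrix (Fin 2) (Fin 2) (ZMod 2), M = 1 ∨ M = !![1,1;0,1] →
        ∀ N : Matrix (Fin 2) (Fin 2) (ZMod 2), M * N = 1 → (N = 1 ∨ N = !![1,1;0,1]) := by
      decide
    have hmulinv : ((x : GL (Fin 2) (ZMod 8)) : Matrix (Fin 2) (Fin 2) (ZMod 8)).map c82 *
        ((x⁻¹ : GL (Fin 2) (ZMod 8)) : Matrix (Fin 2) (Fin 2) (ZMod 8)).map c82 = 1 := by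
      rw [← Matrix.map_mul, ← Units.val_mul, mul_inv_cancel, Units.val_one,
        Matrix.map_one _ (map_zero c82) (map_one c82)]
    exact hkey _ ihx _ hmulinv

/-- In a finite `p`-group, every square (for p = 2) lies in every maximal subgroup,
hence in the Frattini subgroup. -/
theorem sq_mem_frattini {G : Type*} [Group G] [Finite G] (hG : IsPGroup 2 G) (y : G) :
    y * y ∈ frattini G := by
  haveI : Fact (Nat.Prime 2) := ⟨Nat.prime_two⟩
  have hnil : Group.IsNilpotent G := hG.isNilpotent
  have hnormal : ∀ M : Subgroup G, IsCoatom M → M.Normal :=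
    ((isNilpotent_of_finite_tfae (G := G)).out 0 2).mp hnil
  rw [frattini, Order.radical, Subgroup.mem_iInf]
  intro M
  rw [Subgroup.mem_iInf]
  intro hM
  haveI : M.Normal := hnormal M hM
  -- quotient by M has trivial subgroup lattice
  set π : G →* G ⧸ M := QuotientGroup.mk' M with hπ
  have hsurj : Function.Surjective π := QuotientGroup.mk'_surjective M
  have hdichotomy : ∀ S : Subgroup (G ⧸ M), S = ⊥ ∨ S = ⊤ := by
    intro S
    have hle : M ≤ S.comap π := by
      intro m hm
      simp only [Subgroup.mem_comap]
      have : π m = 1 := by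
        rw [hπ]
        rwa [QuotientGroup.mk'_apply, QuotientGroup.eq_one_iff]
      rw [this]; exact S.one_mem
    rcases eq_or_lt_of_le hle with heq | hlt
    · left
      have : S = Subgroup.map π (Subgroup.comap π S) :=
        (Subgroup.map_comap_eq_self_of_surjective hsurj S).symm
      rw [this, ← heq]
      rw [eq_bot_iff]
      rintro x ⟨m, hm, rfl⟩
      simp only [Subgroup.mem_bot]
      rw [hπ, QuotientGroup.mk'_apply, QuotientGroup.eq_one_iff]
      exact hm
    · right
      have htop : S.comap π = ⊤ := hM.2 _ hlt
      have : S = Subgroup.map π (Subgroup.comap π S) :=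
        (Subgroup.map_comap_eq_self_of_surjective hsurj S).symm
      rw [this, htop]
      exact Subgroup.map_top_of_surjective π hsurj
  -- now the image q of y satisfies q^2 = 1
  set q : G ⧸ M := π y with hq
  have hq2 : q * q = 1 := by
    rcases hdichotomy (Subgroup.zpowers (q * q)) with hbot | htop
    · have := Subgroup.mem_zpowers (q * q)
      rw [hbot, Subgroup.mem_bot] at this
      exact this
    · have hqmem : q ∈ Subgroup.zpowers (q * q) := by rw [htop]; trivial
      obtain ⟨j, hj⟩ := hqmem
      have hj' : (q * q) ^ j = q := hj
      have hqq : q ^ ((2:ℤ) * j) = (q * q) ^ j := by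
        rw [zpow_mul]
        rw [zpow_two]
      have h1 : q ^ (2 * j - 1) = 1 := by
        rw [zpow_sub, zpow_one, hqq, hj', mul_inv_cancel]
      obtain ⟨n, hn⟩ := (hG.to_quotient M) q
      have hdvd2 : orderOf q ∣ 2 ^ n := orderOf_dvd_of_pow_eq_one hn
      obtain ⟨i, hin, hoi⟩ := (Nat.dvd_prime_pow Nat.prime_two).mp hdvd2
      have hzdvd : (orderOf q : ℤ) ∣ 2 * j - 1 := orderOf_dvd_iff_zpow_eq_one.mpr h1
      match i, hoi with
      | 0, hoi =>
        have hq1 : q = 1 := orderOf_eq_one_iff.mp (by simpa using hoi)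
        rw [hq1, one_mul]
      | (i+1), hoi =>
        exfalso
        have h2 : (2:ℤ) ∣ (orderOf q : ℤ) := by
          rw [hoi]
          exact_mod_cast dvd_pow_self 2 (Nat.succ_ne_zero i)
        obtain ⟨m, hm⟩ := h2.trans hzdvd
        omega
  have : π (y * y) = 1 := by rw [map_mul, ← hq, hq2]
  rwa [hπ, QuotientGroup.mk'_apply, QuotientGroup.eq_one_iff] at this

section
variable {R : Type*} [CommRing R]

theorem sq_expand (s : ℕ) (hs : 1 ≤ s) (N : Matrix (Fin 2) (Fin 2) R) :
    (1 + (2:R)^s • N) * (1 + (2:R)^s • N)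
      = 1 + (2:R)^(s+1) • (N + (2:R)^(s-1) • (N * N)) := by
  have hc : (2:R)^s + (2:R)^s = (2:R)^(s+1) := by rw [pow_succ]; ring
  have hc2 : (2:R)^s * (2:R)^s = (2:R)^(s+1) * (2:R)^(s-1) := by
    rw [← pow_add, ← pow_add]
    congr 1
    omega
  simp only [mul_add, add_mul, one_mul, mul_one, Matrix.smul_mul, Matrix.mul_smul, smul_smul,
    smul_add]
  rw [hc2, ← hc, add_smul]
  abel

theorem pow_two_pow_eq_one {k : ℕ} (hk : 1 ≤ k) (A : GL (Fin 2) (ZMod (2^k)))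
    (N : Matrix (Fin 2) (Fin 2) (ZMod (2^k)))
    (hN : ((A * A : GL (Fin 2) (ZMod (2^k))) : Matrix (Fin 2) (Fin 2) (ZMod (2^k)))
      = 1 + (2 : ZMod (2^k))^1 • N) :
    A ^ (2^k) = 1 := by
  have key : ∀ j : ℕ, ∃ M : Matrix (Fin 2) (Fin 2) (ZMod (2^k)),
      (((A*A) ^ (2^j) : GL (Fin 2) (ZMod (2^k))) : Matrix (Fin 2) (Fin 2) (ZMod (2^k)))
        = 1 + (2 : ZMod (2^k))^(j+1) • M := by
    intro j
    induction j with
    | zero => exact ⟨N, by simpa using hN⟩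
    | succ j ih =>
      obtain ⟨M, hM⟩ := ih
      refine ⟨M + (2 : ZMod (2^k))^j • (M * M), ?_⟩
      have hp : (A*A) ^ (2^(j+1)) = ((A*A) ^ (2^j)) * ((A*A) ^ (2^j)) := by
        rw [← pow_add]
        congr 1
        omega
      rw [hp, Units.val_mul, hM, sq_expand (j+1) (by omega)]
      simp
  obtain ⟨M, hM⟩ := key (k-1)
  have h0 : ((2 : ZMod (2^k))^k) = 0 := by
    have : ((2 : ZMod (2^k)) ^ k) = ((2 ^ k : ℕ) : ZMod (2^k)) := by push_cast; ring
    rw [this, ZMod.natCast_eq_zero_iff]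
  have hk1 : k - 1 + 1 = k := by omega
  rw [hk1] at hM
  have h2k : 2^k = 2 * 2^(k-1) := by
    conv_lhs => rw [show k = (k-1)+1 by omega]
    rw [pow_succ]
    ring
  have hpow : (A*A) ^ (2^(k-1)) = A ^ (2^k) := by
    rw [← sq, ← pow_mul]
    exact (congrArg (fun n => A ^ n) h2k).symm
  apply Units.ext
  rw [← hpow, hM, h0, zero_smul, add_zero, Units.val_one]
end



section
variable {k : ℕ}

theorem map_comp8 (hk : 3 ≤ k) (M : Matrix (Fin 2) (Fin 2) (ZMod (2^k))) :
    (M.map (ZMod.castHom (dvd8 hk) (ZMod 8))).map c82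
      = M.map (ZMod.castHom (dvd2 hk) (ZMod 2)) := by
  have hcomp := ZMod.castHom_comp (show (2:ℕ) ∣ 8 by norm_num) (dvd8 hk)
  ext i j
  simp only [Matrix.map_apply]
  have : c82 ((ZMod.castHom (dvd8 hk) (ZMod 8)) (M i j))
      = (c82.comp (ZMod.castHom (dvd8 hk) (ZMod 8))) (M i j) := rfl
  rw [this, c82, hcomp]

theorem ikpred_repr (hk : 3 ≤ k) (x : GL (Fin 3) (ZMod (2^k))) (hx : IkPred k x) :
    ∃ (A : GL (Fin 2) (ZMod (2^k))) (e f : ZMod (2^k)),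
      x = blkGL A e f ∧
      (∃ h ∈ H, ((h : GL (Fin 2) (ZMod 8)) : Matrix (Fin 2) (Fin 2) (ZMod 8))
        = ((A : GL (Fin 2) (ZMod (2^k))) : Matrix (Fin 2) (Fin 2) (ZMod (2^k))).map
            (ZMod.castHom (dvd8 hk) (ZMod 8))) := by
  obtain ⟨h02, h12, h22, ⟨h, hh, hent⟩, _⟩ := hx
  obtain ⟨A, e, f, hxm, hAval⟩ := repr_blk x h02 h12 h22
  refine ⟨A, e, f, Units.ext ?_, ⟨h, hh, ?_⟩⟩
  · rw [hxm]
    rfl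
  · ext i j
    rw [Matrix.map_apply]
    have hAij : ((A : GL (Fin 2) (ZMod (2^k))) : Matrix (Fin 2) (Fin 2) (ZMod (2^k))) i j
        = (x : Matrix (Fin 3) (Fin 3) (ZMod (2^k))) i.castSucc j.castSucc := by
      fin_cases i <;> fin_cases j <;>
        simp [hAval, Matrix.vecHead, Matrix.vecTail]
    rw [hAij, ← val_cast8 hk]
    exact hent i j

theorem ik_pgroup (hk : 3 ≤ k) (Ik : Subgroup (GL (Fin 3) (ZMod (2^k))))
    (hIk : ∀ g, g ∈ Ik ↔ IkPred k g) : IsPGroup 2 ↥Ik := by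
  intro γ
  obtain ⟨A, e, f, hrepr, h, hh, hcast⟩ := ikpred_repr hk ↑γ ((hIk _).mp γ.2)
  -- the 2x2 part mod 2 is 1 or U
  have hA2mod : ((A : GL (Fin 2) (ZMod (2^k))) : Matrix (Fin 2) (Fin 2) (ZMod (2^k))).map
        (ZMod.castHom (dvd2 hk) (ZMod 2)) = 1 ∨
      ((A : GL (Fin 2) (ZMod (2^k))) : Matrix (Fin 2) (Fin 2) (ZMod (2^k))).map
        (ZMod.castHom (dvd2 hk) (ZMod 2)) = !![1,1;0,1] := by
    rw [← map_comp8 hk, ← hcast]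
    exact H_mod2 h hh
  have hAA : ((A * A : GL (Fin 2) (ZMod (2^k))) : Matrix (Fin 2) (Fin 2) (ZMod (2^k))).map
      (ZMod.castHom (dvd2 hk) (ZMod 2)) = 1 := by
    rw [Units.val_mul, Matrix.map_mul]
    rcases hA2mod with h1 | h1 <;> rw [h1]
    · rw [one_mul]
    · decide
  -- extract N with (A*A) = 1 + 2 N
  have hentry : ∀ i j, ∃ y, (((A * A : GL (Fin 2) (ZMod (2^k)))
      : Matrix (Fin 2) (Fin 2) (ZMod (2^k))) - 1) i j = 2 * y := by
    intro i j
    apply two_dvd_of_cast2_eq_zero hk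
    have : (ZMod.castHom (dvd2 hk) (ZMod 2)) ((((A * A : GL (Fin 2) (ZMod (2^k)))
        : Matrix (Fin 2) (Fin 2) (ZMod (2^k))) - 1) i j)
        = ((((A * A : GL (Fin 2) (ZMod (2^k)))
          : Matrix (Fin 2) (Fin 2) (ZMod (2^k))) - 1).map (ZMod.castHom (dvd2 hk) (ZMod 2))) i j
        := rfl
    rw [this, Matrix.map_sub _ (fun a b => map_sub (ZMod.castHom (dvd2 hk) (ZMod 2)) a b), hAA]
    · simp [Matrix.map_one _ (map_zero _) (map_one _)]
  choose N hN using fun p : Fin 2 × Fin 2 => hentry p.1 p.2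
  have hNmat : ((A * A : GL (Fin 2) (ZMod (2^k))) : Matrix (Fin 2) (Fin 2) (ZMod (2^k)))
      = 1 + (2 : ZMod (2^k))^1 • Matrix.of (fun i j => N (i, j)) := by
    ext i j
    have := hN (i, j)
    simp only [Matrix.sub_apply] at this
    simp only [Matrix.add_apply, Matrix.smul_apply, Matrix.of_apply, pow_one, smul_eq_mul]
    linear_combination this
  have hA1 : A ^ (2^k) = 1 := pow_two_pow_eq_one (by omega) A _ hNmat
  obtain ⟨e', f', hef⟩ := blkGL_pow A e f (2^k)
  rw [hA1] at hef
  refine ⟨k + k, ?_⟩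
  have hcalc : (blkGL A e f) ^ (2^(k+k)) = 1 := by
    have hsplit : (2:ℕ)^(k+k) = 2^k * 2^k := by rw [pow_add]
    rw [hsplit, pow_mul, hef, blkGL_one_pow]
    have hz : ((2^k : ℕ) : ZMod (2^k)) = 0 := by
      rw [ZMod.natCast_eq_zero_iff]
    rw [hz, zero_mul, zero_mul, blkGL_one]
  apply Subtype.ext
  rw [SubgroupClass.coe_pow, OneMemClass.coe_one, hrepr, hcalc]
end


section
variable {k : ℕ}

/-- Entry lemmas for blkM -/
theorem blkM_20 {R : Type*} [CommRing R] (A : Matrix (Fin 2) (Fin 2) R) (e f : R) :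
    blkM A e f 2 0 = e := rfl
theorem blkM_21 {R : Type*} [CommRing R] (A : Matrix (Fin 2) (Fin 2) R) (e f : R) :
    blkM A e f 2 1 = f := rfl
theorem blkM_3_00 {R : Type*} [CommRing R] (A : Matrix (Fin 2) (Fin 2) R) (e f : R) :
    blkM A e f 0 0 = A 0 0 := rfl
theorem blkM_3_01 {R : Type*} [CommRing R] (A : Matrix (Fin 2) (Fin 2) R) (e f : R) :
    blkM A e f 0 1 = A 0 1 := rfl
theorem blkM_3_10 {R : Type*} [CommRing R] (A : Matrix (Fin 2) (Fin 2) R) (e f : R) :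
    blkM A e f 1 0 = A 1 0 := rfl
theorem blkM_3_11 {R : Type*} [CommRing R] (A : Matrix (Fin 2) (Fin 2) R) (e f : R) :
    blkM A e f 1 1 = A 1 1 := rfl

/-- Membership criterion for block elements in `Ik`. -/
theorem blk_mem (hk : 3 ≤ k) (Ik : Subgroup (GL (Fin 3) (ZMod (2^k))))
    (hIk : ∀ g, g ∈ Ik ↔ IkPred k g)
    (A : GL (Fin 2) (ZMod (2^k))) (e f : ZMod (2^k))
    (h : GL (Fin 2) (ZMod 8)) (hh : h ∈ H)
    (hcast : ((h : GL (Fin 2) (ZMod 8)) : Matrix (Fin 2) (Fin 2) (ZMod 8))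
      = ((A : GL (Fin 2) (ZMod (2^k))) : Matrix (Fin 2) (Fin 2) (ZMod (2^k))).map
          (ZMod.castHom (dvd8 hk) (ZMod 8)))
    (hpar : ((2 : ZMod (2^k)) ∣ e ↔
      ((h : GL (Fin 2) (ZMod 8)) : Matrix (Fin 2) (Fin 2) (ZMod 8)) 0 0
        * ((h : GL (Fin 2) (ZMod 8)) : Matrix (Fin 2) (Fin 2) (ZMod 8)) 1 1
        - ((h : GL (Fin 2) (ZMod 8)) : Matrix (Fin 2) (Fin 2) (ZMod 8)) 0 1
        * ((h : GL (Fin 2) (ZMod 8)) : Matrix (Fin 2) (Fin 2) (ZMod 8)) 1 0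
        ∈ ({1, 7} : Set (ZMod 8)))) :
    blkGL A e f ∈ Ik := by
  rw [hIk]
  have hval : ((blkGL A e f : GL (Fin 3) (ZMod (2^k))) : Matrix (Fin 3) (Fin 3) (ZMod (2^k)))
      = blkM ((A : GL (Fin 2) (ZMod (2^k))) : Matrix (Fin 2) (Fin 2) (ZMod (2^k))) e f :=
    blkGL_val A e f
  have hdet8 : (((((A : GL (Fin 2) (ZMod (2^k))) : Matrix (Fin 2) (Fin 2) (ZMod (2^k))) 0 0
      * ((A : GL (Fin 2) (ZMod (2^k))) : Matrix (Fin 2) (Fin 2) (ZMod (2^k))) 1 1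
      - ((A : GL (Fin 2) (ZMod (2^k))) : Matrix (Fin 2) (Fin 2) (ZMod (2^k))) 0 1
      * ((A : GL (Fin 2) (ZMod (2^k))) : Matrix (Fin 2) (Fin 2) (ZMod (2^k))) 1 0).val : ZMod 8))
      = ((h : GL (Fin 2) (ZMod 8)) : Matrix (Fin 2) (Fin 2) (ZMod 8)) 0 0
        * ((h : GL (Fin 2) (ZMod 8)) : Matrix (Fin 2) (Fin 2) (ZMod 8)) 1 1
        - ((h : GL (Fin 2) (ZMod 8)) : Matrix (Fin 2) (Fin 2) (ZMod 8)) 0 1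
        * ((h : GL (Fin 2) (ZMod 8)) : Matrix (Fin 2) (Fin 2) (ZMod 8)) 1 0 := by
    rw [val_cast8 hk, hcast]
    simp only [Matrix.map_apply, map_sub, map_mul]
  refine ⟨?_, ?_, ?_, ⟨h, hh, ?_⟩, ?_⟩
  · rw [hval]; rfl
  · rw [hval]; rfl
  · rw [hval]; rfl
  · intro i j
    rw [hval, blkM_castSucc, val_cast8 hk, hcast]
    rfl
  · rw [hval, blkM_20, blkM_3_00, blkM_3_01, blkM_3_10, blkM_3_11, hdet8]
    exact hpar

/-- the det-one parity hypothesis, for h with explicit det 1 value -/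
theorem par_of_det_one (hk : 3 ≤ k) (e : ZMod (2^k)) (hdvd : (2 : ZMod (2^k)) ∣ e)
    (h : GL (Fin 2) (ZMod 8))
    (hdet : ((h : GL (Fin 2) (ZMod 8)) : Matrix (Fin 2) (Fin 2) (ZMod 8)) 0 0
        * ((h : GL (Fin 2) (ZMod 8)) : Matrix (Fin 2) (Fin 2) (ZMod 8)) 1 1
        - ((h : GL (Fin 2) (ZMod 8)) : Matrix (Fin 2) (Fin 2) (ZMod 8)) 0 1
        * ((h : GL (Fin 2) (ZMod 8)) : Matrix (Fin 2) (Fin 2) (ZMod 8)) 1 0 = 1) :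
    ((2 : ZMod (2^k)) ∣ e ↔
      ((h : GL (Fin 2) (ZMod 8)) : Matrix (Fin 2) (Fin 2) (ZMod 8)) 0 0
        * ((h : GL (Fin 2) (ZMod 8)) : Matrix (Fin 2) (Fin 2) (ZMod 8)) 1 1
        - ((h : GL (Fin 2) (ZMod 8)) : Matrix (Fin 2) (Fin 2) (ZMod 8)) 0 1
        * ((h : GL (Fin 2) (ZMod 8)) : Matrix (Fin 2) (Fin 2) (ZMod 8)) 1 0
        ∈ ({1, 7} : Set (ZMod 8))) := by
  rw [hdet]
  simp [hdvd]

/-- Key induction: matrices congruent to 1 mod 2^m (with a trace condition at m = 3)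
give elements of the Frattini subgroup. -/
theorem key (hk : 3 ≤ k) (Ik : Subgroup (GL (Fin 3) (ZMod (2^k))))
    (hIk : ∀ g, g ∈ Ik ↔ IkPred k g) :
    ∀ (d m : ℕ), 3 ≤ m → k ≤ m + d →
    ∀ (A : GL (Fin 2) (ZMod (2^k))) (C : Matrix (Fin 2) (Fin 2) (ZMod (2^k))),
      ((A : GL (Fin 2) (ZMod (2^k))) : Matrix (Fin 2) (Fin 2) (ZMod (2^k)))
        = 1 + ((2 : ZMod (2^k))^m) • C →
      (m = 3 → ∃ t, C 0 0 + C 1 1 = 2 * t) →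
      ∃ (hmem : blkGL A 0 0 ∈ Ik), (⟨blkGL A 0 0, hmem⟩ : Ik) ∈ frattini ↥Ik := by
  haveI : NeZero (2^k) := NeZero.of_pos (Nat.two_pow_pos k)
  have hPG : IsPGroup 2 ↥Ik := ik_pgroup hk Ik hIk
  intro d
  induction d with
  | zero =>
    intro m hm3 hkm A C hAmat _
    have hA1 : A = 1 := by
      apply Units.ext
      rw [hAmat, two_pow_eq_zero (by omega), zero_smul, add_zero, Units.val_one]
    have hmem : blkGL A 0 0 ∈ Ik := by
      rw [hA1, blkGL_one]
      exact Ik.one_mem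
    refine ⟨hmem, ?_⟩
    have h1 : (⟨blkGL A 0 0, hmem⟩ : Ik) = 1 := by
      apply Subtype.ext
      show blkGL A 0 0 = 1
      rw [hA1, blkGL_one]
    rw [h1]
    exact (frattini ↥Ik).one_mem
  | succ d ih =>
    intro m hm3 hkm A C hAmat htr
    by_cases hkd : k ≤ m + d
    · exact ih m hm3 hkd A C hAmat htr
    -- construct B = 1 + 2^(m-1) C
    set q : ZMod (2^k) := (2 : ZMod (2^k))^(m-2) with hq
    set B : Matrix (Fin 2) (Fin 2) (ZMod (2^k)) := 1 + ((2 : ZMod (2^k))^(m-1)) • C with hB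
    have hc2 : (2 : ZMod (2^k))^(m-1) = 2 * q := by
      rw [hq, ← pow_succ']
      congr 1
      omega
    have hdet : B.det = 1 + 2 * (q * (C 0 0 + C 1 1)
        + 2 * q * q * (C 0 0 * C 1 1 - C 0 1 * C 1 0)) := by
      rw [Matrix.det_fin_two]
      simp only [hB, Matrix.add_apply, Matrix.smul_apply, Matrix.one_apply, smul_eq_mul]
      rw [hc2]
      norm_num
      ring
    have hu : IsUnit B.det := by
      rw [hdet]
      exact isUnit_one_add_two_mul _
    set BGL : GL (Fin 2) (ZMod (2^k)) := Matrix.GeneralLinearGroup.mk'' B hu with hBGL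
    have hBval : ((BGL : GL (Fin 2) (ZMod (2^k))) : Matrix (Fin 2) (Fin 2) (ZMod (2^k))) = B :=
      rfl
    -- the reduction of B mod 8, membership in H
    have hHB : ∃ h ∈ H, ((h : GL (Fin 2) (ZMod 8)) : Matrix (Fin 2) (Fin 2) (ZMod 8))
        = B.map (ZMod.castHom (dvd8 hk) (ZMod 8)) ∧
        ((h : GL (Fin 2) (ZMod 8)) : Matrix (Fin 2) (Fin 2) (ZMod 8)) 0 0
          * ((h : GL (Fin 2) (ZMod 8)) : Matrix (Fin 2) (Fin 2) (ZMod 8)) 1 1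
          - ((h : GL (Fin 2) (ZMod 8)) : Matrix (Fin 2) (Fin 2) (ZMod 8)) 0 1
          * ((h : GL (Fin 2) (ZMod 8)) : Matrix (Fin 2) (Fin 2) (ZMod 8)) 1 0 = 1 := by
      rcases Nat.lt_or_ge m 4 with hm4 | hm4
      · -- m = 3
        have hm : m = 3 := by omega
        obtain ⟨t, ht⟩ := htr hm
        set c8 := ZMod.castHom (dvd8 hk) (ZMod 8) with hc8
        have hc82 : c8 (2 : ZMod (2^k)) = 2 := by
          rw [hc8]
          exact map_ofNat _ 2
        have htr8 : c8 (C 0 0) + c8 (C 1 1) = 2 * c8 t := by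
          rw [← map_add, ht, map_mul, hc82]
        have h4eq : ∀ u v w : ZMod 8, u + v = 2*w → 4*v = 4*u := by decide
        obtain ⟨h, hh, hmat⟩ := H8 (c8 (C 0 0)) (c8 (C 0 1)) (c8 (C 1 0))
        refine ⟨h, hh, ?_, ?_⟩
        · rw [hmat]
          ext i j
          rw [Matrix.map_apply]
          have hpow4 : c8 ((2 : ZMod (2^k))^(m-1)) = 4 := by
            rw [map_pow, hc82, hm]
            decide
          fin_cases i <;> fin_cases j <;>
            simp only [hB, Matrix.add_apply, Matrix.smul_apply, Matrix.one_apply, smul_eq_mul,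
              map_add, map_mul, map_one, map_zero, hpow4] <;>
            simp [Matrix.vecHead, Matrix.vecTail]
          · exact (h4eq _ _ _ htr8).symm ▸ rfl
        · rw [hmat]
          have : ∀ a b c : ZMod 8,
              (!![1 + 4*a, 4*b; 4*c, 1 + 4*a] : Matrix (Fin 2) (Fin 2) (ZMod 8)) 0 0
                * !![1 + 4*a, 4*b; 4*c, 1 + 4*a] 1 1
                - !![1 + 4*a, 4*b; 4*c, 1 + 4*a] 0 1
                * !![1 + 4*a, 4*b; 4*c, 1 + 4*a] 1 0 = 1 := by decide
          exact this _ _ _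
      · -- m ≥ 4 : reduction is 1
        refine ⟨1, H.one_mem, ?_, by decide⟩
        have hpow0 : (ZMod.castHom (dvd8 hk) (ZMod 8)) ((2 : ZMod (2^k))^(m-1)) = 0 := by
          simp only [map_pow, map_ofNat]
          have hsplit3 : (2 : ZMod 8)^(m-1) = (2:ZMod 8)^3 * 2^(m-1-3) := by
            rw [← pow_add]
            congr 1
            omega
          rw [hsplit3, show (2:ZMod 8)^3 = 0 from by decide, zero_mul]
        have hBmap : B.map (ZMod.castHom (dvd8 hk) (ZMod 8))
            = (1 : Matrix (Fin 2) (Fin 2) (ZMod (2^k))).map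
                (ZMod.castHom (dvd8 hk) (ZMod 8)) := by
          ext i j
          simp only [Matrix.map_apply, hB, Matrix.add_apply, Matrix.smul_apply, smul_eq_mul,
            map_add, map_mul, hpow0, zero_mul, add_zero]
        rw [Units.val_one, hBmap, Matrix.map_one _ (map_zero _) (map_one _)]
    obtain ⟨h8, hh8, hcast8, hdet8⟩ := hHB
    have hx : blkGL BGL 0 0 ∈ Ik := by
      apply blk_mem hk Ik hIk BGL 0 0 h8 hh8 (by rw [hcast8, hBval])
      exact par_of_det_one hk 0 (dvd_zero 2) h8 hdet8
    -- B*B = 1 + 2^m • D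
    have hBB : ((BGL * BGL : GL (Fin 2) (ZMod (2^k))) : Matrix (Fin 2) (Fin 2) (ZMod (2^k)))
        = 1 + ((2 : ZMod (2^k))^m) • (C + ((2 : ZMod (2^k))^(m-2)) • (C * C)) := by
      rw [Units.val_mul, hBval, hB, sq_expand (m-1) (by omega)]
      have e1 : m - 1 + 1 = m := by omega
      have e2 : m - 1 - 1 = m - 2 := by omega
      rw [e1, e2]
    -- A' = (B*B)⁻¹ * A
    set A' : GL (Fin 2) (ZMod (2^k)) := (BGL * BGL)⁻¹ * A with hA'
    set V : Matrix (Fin 2) (Fin 2) (ZMod (2^k)) :=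
      (((BGL * BGL)⁻¹ : GL (Fin 2) (ZMod (2^k))) : Matrix (Fin 2) (Fin 2) (ZMod (2^k))) with hV
    have hVmul : V * ((BGL * BGL : GL (Fin 2) (ZMod (2^k)))
        : Matrix (Fin 2) (Fin 2) (ZMod (2^k))) = 1 := by
      rw [hV, ← Units.val_mul, inv_mul_cancel, Units.val_one]
    have hexp : (2 : ZMod (2^k))^m * (2 : ZMod (2^k))^(m-2)
        = (2 : ZMod (2^k))^(m+1) * (2 : ZMod (2^k))^(m-3) := by
      rw [← pow_add, ← pow_add]
      congr 1
      omega
    have hdiff : (1 + ((2 : ZMod (2^k))^m) • C)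
        = ((BGL * BGL : GL (Fin 2) (ZMod (2^k))) : Matrix (Fin 2) (Fin 2) (ZMod (2^k)))
          + (-((2 : ZMod (2^k))^(m+1) * (2 : ZMod (2^k))^(m-3))) • (C * C) := by
      rw [hBB, smul_add, smul_smul, hexp, neg_smul]
      abel
    set C' : Matrix (Fin 2) (Fin 2) (ZMod (2^k)) :=
      (-((2 : ZMod (2^k))^(m-3))) • (V * (C * C)) with hC'
    have hA'mat : ((A' : GL (Fin 2) (ZMod (2^k))) : Matrix (Fin 2) (Fin 2) (ZMod (2^k)))
        = 1 + ((2 : ZMod (2^k))^(m+1)) • C' := by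
      have : ((A' : GL (Fin 2) (ZMod (2^k))) : Matrix (Fin 2) (Fin 2) (ZMod (2^k)))
          = V * ((A : GL (Fin 2) (ZMod (2^k))) : Matrix (Fin 2) (Fin 2) (ZMod (2^k))) := by
        rw [hA', Units.val_mul, hV]
      rw [this, hAmat, hdiff, mul_add, hVmul, Matrix.mul_smul, hC', smul_smul]
      congr 2
      ring
    obtain ⟨hmem', hfrat'⟩ := ih (m+1) (by omega) (by omega) A' C' hA'mat
      (fun hcontra => absurd hcontra (by omega))
    -- combine
    have hAeq : A = (BGL * BGL) * A' := by
      rw [hA', ← mul_assoc, mul_inv_cancel, one_mul]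
    have hprod : blkGL A 0 0 = blkGL BGL 0 0 * blkGL BGL 0 0 * blkGL A' 0 0 := by
      rw [blkGL_mul₀, blkGL_mul₀, ← hAeq]
    have hmem : blkGL A 0 0 ∈ Ik := by
      rw [hprod]
      exact Ik.mul_mem (Ik.mul_mem hx hx) hmem'
    refine ⟨hmem, ?_⟩
    have heq : (⟨blkGL A 0 0, hmem⟩ : Ik)
        = (⟨blkGL BGL 0 0, hx⟩ : Ik) * ⟨blkGL BGL 0 0, hx⟩ * ⟨blkGL A' 0 0, hmem'⟩ := by
      apply Subtype.ext
      exact hprod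
    rw [heq]
    exact mul_mem (sq_mem_frattini hPG ⟨blkGL BGL 0 0, hx⟩) hfrat'
end

theorem mem_frattini_of_congruent_identity (k : ℕ) (hk : 3 ≤ k)
    (Ik : Subgroup (GL (Fin 3) (ZMod (2 ^ k))))
    (hIk : ∀ g, g ∈ Ik ↔ IkPred k g)
    (g : GL (Fin 3) (ZMod (2 ^ k))) (hg : g ∈ Ik)
    (he : (4 : ZMod (2 ^ k)) ∣ (g : Matrix (Fin 3) (Fin 3) (ZMod (2 ^ k))) 2 0)
    (hf : (4 : ZMod (2 ^ k)) ∣ (g : Matrix (Fin 3) (Fin 3) (ZMod (2 ^ k))) 2 1)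
    (hM : ∀ i j : Fin 2,
      ((((g : Matrix (Fin 3) (Fin 3) (ZMod (2 ^ k))) i.castSucc j.castSucc).val : ZMod 8))
        = (1 : Matrix (Fin 2) (Fin 2) (ZMod 8)) i j) :
    (⟨g, hg⟩ : Ik) ∈ frattini Ik := by
  haveI : NeZero (2^k) := NeZero.of_pos (Nat.two_pow_pos k)
  have hPG : IsPGroup 2 ↥Ik := ik_pgroup hk Ik hIk
  obtain ⟨A, e, f, hgrepr, h₀, hh₀, hcast₀⟩ := ikpred_repr hk g ((hIk g).mp hg)
  have hgm : (g : Matrix (Fin 3) (Fin 3) (ZMod (2^k)))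
      = blkM ((A : GL (Fin 2) (ZMod (2^k))) : Matrix (Fin 2) (Fin 2) (ZMod (2^k))) e f := by
    rw [hgrepr]
    rfl
  have he4 : ∃ e₁, e = 4 * e₁ := by
    obtain ⟨c, hc⟩ := he
    refine ⟨c, ?_⟩
    rw [← hc, hgm, blkM_20]
  have hf4 : ∃ f₁, f = 4 * f₁ := by
    obtain ⟨c, hc⟩ := hf
    refine ⟨c, ?_⟩
    rw [← hc, hgm, blkM_21]
  have hA8 : ∀ i j : Fin 2, (ZMod.castHom (dvd8 hk) (ZMod 8))
      (((A : GL (Fin 2) (ZMod (2^k))) : Matrix (Fin 2) (Fin 2) (ZMod (2^k))) i j)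
      = (1 : Matrix (Fin 2) (Fin 2) (ZMod 8)) i j := by
    intro i j
    have hMij := hM i j
    rw [hgm, blkM_castSucc, val_cast8 hk] at hMij
    exact hMij
  have hent8 : ∀ i j : Fin 2, ∃ y,
      (((A : GL (Fin 2) (ZMod (2^k))) : Matrix (Fin 2) (Fin 2) (ZMod (2^k))) - 1) i j
        = 8 * y := by
    intro i j
    apply eight_dvd_of_cast8_eq_zero hk
    have h1c : (ZMod.castHom (dvd8 hk) (ZMod 8))
        ((1 : Matrix (Fin 2) (Fin 2) (ZMod (2^k))) i j)
        = (1 : Matrix (Fin 2) (Fin 2) (ZMod 8)) i j := by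
      simp only [Matrix.one_apply, apply_ite (ZMod.castHom (dvd8 hk) (ZMod 8)), map_one, map_zero]
    rw [Matrix.sub_apply, map_sub, hA8 i j, h1c, sub_self]
  choose C₀f hC₀f using fun p : Fin 2 × Fin 2 => hent8 p.1 p.2
  set C₀ : Matrix (Fin 2) (Fin 2) (ZMod (2^k)) := Matrix.of (fun i j => C₀f (i, j)) with hC₀
  have hA0 : ((A : GL (Fin 2) (ZMod (2^k))) : Matrix (Fin 2) (Fin 2) (ZMod (2^k)))
      = 1 + ((2 : ZMod (2^k))^3) • C₀ := by
    ext i j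
    have hspec := hC₀f (i, j)
    simp only [Matrix.sub_apply] at hspec
    simp only [Matrix.add_apply, Matrix.smul_apply, hC₀, Matrix.of_apply, smul_eq_mul]
    have h8 : (2 : ZMod (2^k))^3 = 8 := by norm_num
    rw [h8]
    linear_combination hspec
  -- the 2x2 matrix part of g lies in the Frattini subgroup
  have hmatpart : ∃ (hmem : blkGL A 0 0 ∈ Ik),
      (⟨blkGL A 0 0, hmem⟩ : Ik) ∈ frattini ↥Ik := by
    rcases Nat.even_or_odd ((C₀ 0 0 + C₀ 1 1).val) with hpar | hpar
    · -- even trace case: apply key directly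
      obtain ⟨t0, ht0⟩ := hpar
      have htr : C₀ 0 0 + C₀ 1 1 = 2 * ((t0 : ℕ) : ZMod (2^k)) := by
        rw [← self_eq_cast_val hk (C₀ 0 0 + C₀ 1 1), ht0]
        push_cast
        ring
      exact key hk Ik hIk k 3 le_rfl (by omega) A C₀ hA0 (fun _ => ⟨_, htr⟩)
    · -- odd trace case: correct with the element c0 = [[3,0],[4,1]]
      obtain ⟨t0, ht0⟩ := hpar
      have htr : C₀ 0 0 + C₀ 1 1 = 2 * ((t0 : ℕ) : ZMod (2^k)) + 1 := by
        rw [← self_eq_cast_val hk (C₀ 0 0 + C₀ 1 1), ht0]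
        push_cast
        ring
      set Bc : Matrix (Fin 2) (Fin 2) (ZMod (2^k)) := !![3, 0; 4, 1] with hBc
      have hdetBc : Bc.det = 1 + 2 * 1 := by
        rw [hBc, Matrix.det_fin_two_of]
        norm_num
      have huBc : IsUnit Bc.det := by
        rw [hdetBc]
        exact isUnit_one_add_two_mul 1
      set c0 : GL (Fin 2) (ZMod (2^k)) := Matrix.GeneralLinearGroup.mk'' Bc huBc with hc0
      have hc0val : ((c0 : GL (Fin 2) (ZMod (2^k))) : Matrix (Fin 2) (Fin 2) (ZMod (2^k)))
          = Bc := rfl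
      have hu23 : u2 * u3 ∈ H := H.mul_mem u2_mem u3_mem
      have hval23 : ((u2 * u3 : GL (Fin 2) (ZMod 8)) : Matrix (Fin 2) (Fin 2) (ZMod 8))
          = !![3, 0; 4, 1] := by decide
      have hcastc0 : ((u2 * u3 : GL (Fin 2) (ZMod 8)) : Matrix (Fin 2) (Fin 2) (ZMod 8))
          = Bc.map (ZMod.castHom (dvd8 hk) (ZMod 8)) := by
        have hc3 : (ZMod.cast (3 : ZMod (2^k)) : ZMod 8) = 3 := by
          rw [← ZMod.castHom_apply (h := dvd8 hk)]
          exact map_ofNat _ 3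
        have hc4 : (ZMod.cast (4 : ZMod (2^k)) : ZMod 8) = 4 := by
          rw [← ZMod.castHom_apply (h := dvd8 hk)]
          exact map_ofNat _ 4
        have hcz : (ZMod.cast (0 : ZMod (2^k)) : ZMod 8) = 0 := by
          rw [← ZMod.castHom_apply (h := dvd8 hk)]
          exact map_zero _
        have hco : (ZMod.cast (1 : ZMod (2^k)) : ZMod 8) = 1 := by
          rw [← ZMod.castHom_apply (h := dvd8 hk)]
          exact map_one _
        rw [hval23]
        ext i j
        fin_cases i <;> fin_cases j <;>
          simp [hBc, Matrix.map_apply, Matrix.vecHead, Matrix.vecTail, hc3, hc4, hcz, hco]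
      have hx0par : ((2 : ZMod (2^k)) ∣ (1 : ZMod (2^k)) ↔
          ((u2 * u3 : GL (Fin 2) (ZMod 8)) : Matrix (Fin 2) (Fin 2) (ZMod 8)) 0 0
            * ((u2 * u3 : GL (Fin 2) (ZMod 8)) : Matrix (Fin 2) (Fin 2) (ZMod 8)) 1 1
            - ((u2 * u3 : GL (Fin 2) (ZMod 8)) : Matrix (Fin 2) (Fin 2) (ZMod 8)) 0 1
            * ((u2 * u3 : GL (Fin 2) (ZMod 8)) : Matrix (Fin 2) (Fin 2) (ZMod 8)) 1 0
            ∈ ({1, 7} : Set (ZMod 8))) := by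
        have hdetval : ((u2 * u3 : GL (Fin 2) (ZMod 8)) : Matrix (Fin 2) (Fin 2) (ZMod 8)) 0 0
            * ((u2 * u3 : GL (Fin 2) (ZMod 8)) : Matrix (Fin 2) (Fin 2) (ZMod 8)) 1 1
            - ((u2 * u3 : GL (Fin 2) (ZMod 8)) : Matrix (Fin 2) (Fin 2) (ZMod 8)) 0 1
            * ((u2 * u3 : GL (Fin 2) (ZMod 8)) : Matrix (Fin 2) (Fin 2) (ZMod 8)) 1 0
            = 3 := by decide
        rw [hdetval]
        apply iff_of_false
        · rintro ⟨y, hy⟩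
          have hcongr := congrArg (ZMod.castHom (dvd2 hk) (ZMod 2)) hy
          rw [map_one, map_mul, map_ofNat] at hcongr
          have h20 : (2 : ZMod 2) = 0 := rfl
          rw [h20, zero_mul] at hcongr
          exact one_ne_zero hcongr
        · decide
      have hx0 : blkGL c0 1 0 ∈ Ik := by
        apply blk_mem hk Ik hIk c0 1 0 (u2 * u3) hu23 (by rw [hcastc0, hc0val]) hx0par
      have hx0sq : blkGL c0 1 0 * blkGL c0 1 0 = blkGL (c0 * c0) 4 0 := by
        rw [blkGL_mul, hc0val]
        congr 1 <;> (rw [hBc]; simp [Matrix.vecHead, Matrix.vecTail]; try norm_num)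
      set C0' : Matrix (Fin 2) (Fin 2) (ZMod (2^k)) := !![1, 0; 2, 0] with hC0'
      have hc0sq : ((c0 * c0 : GL (Fin 2) (ZMod (2^k))) : Matrix (Fin 2) (Fin 2) (ZMod (2^k)))
          = 1 + ((2 : ZMod (2^k))^3) • C0' := by
        rw [Units.val_mul, hc0val, hBc, hC0']
        ext i j
        fin_cases i <;> fin_cases j <;>
          simp [Matrix.mul_apply, Fin.sum_univ_two, Matrix.one_apply, Matrix.add_apply,
            Matrix.smul_apply, Matrix.vecHead, Matrix.vecTail] <;> norm_num
      set V : Matrix (Fin 2) (Fin 2) (ZMod (2^k)) :=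
        (((c0 * c0)⁻¹ : GL (Fin 2) (ZMod (2^k))) : Matrix (Fin 2) (Fin 2) (ZMod (2^k)))
        with hVd
      have hVmul : V * ((c0 * c0 : GL (Fin 2) (ZMod (2^k)))
          : Matrix (Fin 2) (Fin 2) (ZMod (2^k))) = 1 := by
        rw [hVd, ← Units.val_mul, inv_mul_cancel, Units.val_one]
      set W : Matrix (Fin 2) (Fin 2) (ZMod (2^k)) := -(V * C0') with hW
      have hVW : V = 1 + ((2 : ZMod (2^k))^3) • W := by
        have h1 : V * (1 + ((2 : ZMod (2^k))^3) • C0') = 1 := by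
          rw [← hc0sq]
          exact hVmul
        rw [mul_add, mul_one, Matrix.mul_smul] at h1
        rw [hW, smul_neg, ← sub_eq_add_neg]
        exact eq_sub_of_add_eq h1
      have hventry : ∀ i j : Fin 2, V i j
          = (1 : Matrix (Fin 2) (Fin 2) (ZMod (2^k))) i j + 8 * W i j := by
        intro i j
        have := congrFun (congrFun hVW i) j
        simpa [Matrix.add_apply, Matrix.smul_apply, smul_eq_mul,
          show (2 : ZMod (2^k))^3 = 8 by norm_num] using this
      have hv00 : V 0 0 = 1 + 8 * W 0 0 := by
        have := hventry 0 0
        rwa [Matrix.one_apply_eq] at this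
      have hv01 : V 0 1 = 8 * W 0 1 := by
        have := hventry 0 1
        rwa [Matrix.one_apply_ne (by decide), zero_add] at this
      have hv10 : V 1 0 = 8 * W 1 0 := by
        have := hventry 1 0
        rwa [Matrix.one_apply_ne (by decide), zero_add] at this
      have hv11 : V 1 1 = 1 + 8 * W 1 1 := by
        have := hventry 1 1
        rwa [Matrix.one_apply_eq] at this
      set A₁ : GL (Fin 2) (ZMod (2^k)) := (c0 * c0)⁻¹ * A with hA₁
      set C₁ : Matrix (Fin 2) (Fin 2) (ZMod (2^k)) := V * (C₀ - C0') with hC₁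
      have hA₁mat : ((A₁ : GL (Fin 2) (ZMod (2^k))) : Matrix (Fin 2) (Fin 2) (ZMod (2^k)))
          = 1 + ((2 : ZMod (2^k))^3) • C₁ := by
        have hval : ((A₁ : GL (Fin 2) (ZMod (2^k))) : Matrix (Fin 2) (Fin 2) (ZMod (2^k)))
            = V * ((A : GL (Fin 2) (ZMod (2^k))) : Matrix (Fin 2) (Fin 2) (ZMod (2^k))) := by
          rw [hA₁, Units.val_mul, hVd]
        rw [hval, hA0, mul_add, mul_one, Matrix.mul_smul, hC₁, mul_sub, smul_sub]
        have hVW' : V = 1 - (2 : ZMod (2^k))^3 • (V * C0') := by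
          have h1 : V * (1 + ((2 : ZMod (2^k))^3) • C0') = 1 := by
            rw [← hc0sq]
            exact hVmul
          rw [mul_add, mul_one, Matrix.mul_smul] at h1
          exact eq_sub_of_add_eq h1
        nth_rewrite 1 [hVW']
        abel
      have hC100 : C₁ 0 0 = V 0 0 * (C₀ 0 0 - 1) + V 0 1 * (C₀ 1 0 - 2) := by
        rw [hC₁]
        simp [Matrix.mul_apply, Fin.sum_univ_two, Matrix.sub_apply, hC0',
          Matrix.vecHead, Matrix.vecTail]
      have hC111 : C₁ 1 1 = V 1 0 * C₀ 0 1 + V 1 1 * C₀ 1 1 := by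
        rw [hC₁]
        simp [Matrix.mul_apply, Fin.sum_univ_two, Matrix.sub_apply, hC0',
          Matrix.vecHead, Matrix.vecTail]
      have htrace1 : C₁ 0 0 + C₁ 1 1 = 2 * (((t0 : ℕ) : ZMod (2^k))
          + 4 * (W 0 0 * (C₀ 0 0 - 1) + W 0 1 * (C₀ 1 0 - 2)
            + W 1 0 * C₀ 0 1 + W 1 1 * C₀ 1 1)) := by
        rw [hC100, hC111, hv00, hv01, hv10, hv11]
        linear_combination htr
      obtain ⟨hm1, hf1⟩ := key hk Ik hIk k 3 le_rfl (by omega) A₁ C₁ hA₁mat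
        (fun _ => ⟨_, htrace1⟩)
      -- the pure translation corrector y
      set a00 : ZMod (2^k) := ((A₁ : GL (Fin 2) (ZMod (2^k)))
        : Matrix (Fin 2) (Fin 2) (ZMod (2^k))) 0 0 with ha00
      set a01 : ZMod (2^k) := ((A₁ : GL (Fin 2) (ZMod (2^k)))
        : Matrix (Fin 2) (Fin 2) (ZMod (2^k))) 0 1 with ha01
      set y : GL (Fin 3) (ZMod (2^k)) := blkGL 1 (-(2 * a00)) (-(2 * a01)) with hy
      have hymem : y ∈ Ik := by
        apply blk_mem hk Ik hIk 1 (-(2 * a00)) (-(2 * a01)) 1 H.one_mem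
        · rw [Units.val_one, Units.val_one, Matrix.map_one _ (map_zero _) (map_one _)]
        · apply par_of_det_one hk _ ⟨-a00, by ring⟩
          decide
      have hAeq1 : (c0 * c0) * A₁ = A := by
        rw [hA₁, ← mul_assoc, mul_inv_cancel, one_mul]
      have hsplit : blkGL A 0 0
          = (blkGL c0 1 0 * blkGL c0 1 0) * blkGL A₁ 0 0 * (y * y) := by
        rw [hx0sq, blkGL_mul, hAeq1, hy, blkGL_transl_sq, blkGL_transl_mul]
        congr 1 <;> simp only [← ha00, ← ha01] <;> ring
      have hmem : blkGL A 0 0 ∈ Ik := by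
        rw [hsplit]
        exact Ik.mul_mem (Ik.mul_mem (Ik.mul_mem hx0 hx0) hm1) (Ik.mul_mem hymem hymem)
      refine ⟨hmem, ?_⟩
      have heq : (⟨blkGL A 0 0, hmem⟩ : Ik)
          = ((⟨blkGL c0 1 0, hx0⟩ : Ik) * ⟨blkGL c0 1 0, hx0⟩) * ⟨blkGL A₁ 0 0, hm1⟩
            * ((⟨y, hymem⟩ : Ik) * ⟨y, hymem⟩) := by
        apply Subtype.ext
        exact hsplit
      rw [heq]
      exact mul_mem (mul_mem (sq_mem_frattini hPG ⟨blkGL c0 1 0, hx0⟩) hf1)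
        (sq_mem_frattini hPG ⟨y, hymem⟩)
  -- final assembly with the translation part of g
  obtain ⟨hmemA, hfratA⟩ := hmatpart
  obtain ⟨e₁, he₁⟩ := he4
  obtain ⟨f₁, hf₁⟩ := hf4
  set z : GL (Fin 3) (ZMod (2^k)) := blkGL 1 (2 * e₁) (2 * f₁) with hz
  have hzmem : z ∈ Ik := by
    apply blk_mem hk Ik hIk 1 (2 * e₁) (2 * f₁) 1 H.one_mem
    · rw [Units.val_one, Units.val_one, Matrix.map_one _ (map_zero _) (map_one _)]
    · apply par_of_det_one hk _ ⟨e₁, rfl⟩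
      decide
  have hgsplit : g = blkGL A 0 0 * (z * z) := by
    rw [hz, blkGL_transl_sq, blkGL_transl_mul, hgrepr]
    congr 1 <;> simp only [he₁, hf₁] <;> ring
  have heqg : (⟨g, hg⟩ : Ik)
      = (⟨blkGL A 0 0, hmemA⟩ : Ik) * ((⟨z, hzmem⟩ : Ik) * ⟨z, hzmem⟩) := by
    apply Subtype.ext
    exact hgsplit
  rw [heqg]
  exact mul_mem hfratA (sq_mem_frattini hPG ⟨z, hzmem⟩)
end

section
/- Let k ≥ 1. The number of 2×2 matrices M over ℤ/2^kℤ with det M = 0 equals 3·2^{3k−1} − 2^{2k−1}. -/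
open Finset

-- L0: count of elements of ZMod n with val divisible by m
lemma count_dvd_val {n : ℕ} [NeZero n] {m : ℕ} (hm : m ∣ n) (hm0 : 0 < m) :
    ((univ : Finset (ZMod n)).filter fun x => m ∣ x.val).card = n / m := by
  rw [← Finset.card_range (n / m)]
  apply Finset.card_bij' (fun x _ => x.val / m) (fun i _ => ((i * m : ℕ) : ZMod n))
  · intro x hx
    simp only [mem_filter] at hx
    exact mem_range.mpr (Nat.div_lt_div_of_lt_of_dvd hm (ZMod.val_lt x))
  · intro i hi
    simp only [mem_range] at hi
    have h1 : i * m < n := by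
      calc i * m < (n / m) * m := by exact (Nat.mul_lt_mul_right hm0).mpr hi
      _ = n := Nat.div_mul_cancel hm
    simp only [mem_filter, mem_univ, true_and]
    rw [ZMod.val_natCast_of_lt h1]
    exact Dvd.intro_left i rfl
  · intro x hx
    simp only [mem_filter] at hx
    rw [Nat.div_mul_cancel hx.2]
    exact ZMod.natCast_rightInverse x
  · intro i hi
    simp only [mem_range] at hi
    have h1 : i * m < n := by
      calc i * m < (n / m) * m := by exact (Nat.mul_lt_mul_right hm0).mpr hi
      _ = n := Nat.div_mul_cancel hm
    rw [ZMod.val_natCast_of_lt h1, Nat.mul_div_cancel _ hm0]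

-- homogeneous fiber count
lemma fiber_zero_card {n : ℕ} [NeZero n] (a : ZMod n) :
    ((univ : Finset (ZMod n)).filter fun d => a * d = 0).card = Nat.gcd n a.val := by
  have hn : 0 < n := Nat.pos_of_ne_zero (NeZero.ne n)
  set g := Nat.gcd n a.val with hg
  have hg0 : 0 < g := Nat.gcd_pos_of_pos_left _ hn
  have hgn : g ∣ n := Nat.gcd_dvd_left _ _
  have key : ∀ d : ZMod n, a * d = 0 ↔ (n / g) ∣ d.val := by
    intro d
    have h1 : a * d = ((a.val * d.val : ℕ) : ZMod n) := by
      push_cast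
      rw [ZMod.natCast_rightInverse a, ZMod.natCast_rightInverse d]
    rw [h1, ZMod.natCast_eq_zero_iff]
    have hcop : Nat.Coprime (n / g) (a.val / g) := Nat.coprime_div_gcd_div_gcd hg0
    constructor
    · intro h
      have h2 : (n / g) ∣ (a.val / g) * d.val := by
        have : g * (n / g) ∣ g * ((a.val / g) * d.val) := by
          rw [Nat.mul_div_cancel' hgn, ← mul_assoc, Nat.mul_div_cancel' (Nat.gcd_dvd_right n a.val)]
          exact h
        exact (mul_dvd_mul_iff_left hg0.ne').mp this
      exact hcop.dvd_of_dvd_mul_left h2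
    · intro h
      obtain ⟨c, hc⟩ := h
      obtain ⟨a', ha'⟩ := Nat.gcd_dvd_right n a.val
      obtain ⟨n', hn'⟩ := hgn
      refine ⟨a' * c, ?_⟩
      have hdiv : n / g = n' := by rw [hn']; exact Nat.mul_div_cancel_left n' hg0
      rw [hc, hdiv, ha', ← hg, hn']
      ring
  have hfe : (univ : Finset (ZMod n)).filter (fun d => a * d = 0)
      = univ.filter (fun d => (n / g) ∣ d.val) :=
    Finset.filter_congr (fun d _ => by simp [key d])
  rw [hfe, count_dvd_val (Nat.div_dvd_of_dvd hgn) (Nat.div_pos (Nat.le_of_dvd hn hgn) hg0)]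
  exact Nat.div_div_self hgn hn.ne'

-- solvability
lemma solvable_iff {n : ℕ} [NeZero n] (a t : ZMod n) :
    (∃ d, a * d = t) ↔ Nat.gcd n a.val ∣ t.val := by
  set g := Nat.gcd n a.val with hg
  constructor
  · rintro ⟨d, rfl⟩
    have h1 : a * d = ((a.val * d.val : ℕ) : ZMod n) := by
      push_cast
      rw [ZMod.natCast_rightInverse a, ZMod.natCast_rightInverse d]
    have h2 : a.val * d.val ≡ (a * d).val [MOD n] := by
      rw [← ZMod.natCast_eq_natCast_iff, ← h1, ZMod.natCast_rightInverse (a*d)]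
    have h3 : a.val * d.val ≡ (a * d).val [MOD g] := h2.of_dvd (Nat.gcd_dvd_left _ _)
    have h4 : g ∣ a.val * d.val := (Nat.gcd_dvd_right n a.val).mul_right d.val
    exact Nat.modEq_zero_iff_dvd.mp
      (h3.symm.trans (Nat.modEq_zero_iff_dvd.mpr h4))
  · intro h
    have bez := Nat.gcd_eq_gcd_ab n a.val
    have hcast : ((g : ℤ) : ZMod n) = a * ((Nat.gcdB n a.val : ℤ) : ZMod n) := by
      rw [bez]
      push_cast
      rw [ZMod.natCast_self, ZMod.natCast_rightInverse a]
      ring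
    refine ⟨((Nat.gcdB n a.val : ℤ) : ZMod n) * ((t.val / g : ℕ) : ZMod n), ?_⟩
    rw [← mul_assoc, ← hcast]
    have h2 : ((g : ℤ) : ZMod n) = ((g : ℕ) : ZMod n) := by push_cast; ring
    rw [h2, ← Nat.cast_mul, Nat.mul_div_cancel' h]
    exact ZMod.natCast_rightInverse t

lemma fiber_card {n : ℕ} [NeZero n] (a t : ZMod n) :
    ((univ : Finset (ZMod n)).filter fun d => a * d = t).card
      = if Nat.gcd n a.val ∣ t.val then Nat.gcd n a.val else 0 := by
  by_cases h : Nat.gcd n a.val ∣ t.val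
  · rw [if_pos h]
    obtain ⟨d₀, hd₀⟩ := (solvable_iff a t).mpr h
    rw [← fiber_zero_card a]
    apply Finset.card_bij' (fun d _ => d - d₀) (fun e _ => e + d₀)
    · intro d hd
      simp only [mem_filter, mem_univ, true_and] at *
      rw [mul_sub, hd, hd₀, sub_self]
    · intro e he
      simp only [mem_filter, mem_univ, true_and] at *
      rw [mul_add, he, hd₀, zero_add]
    · intro d _; ring
    · intro e _; ring
  · rw [if_neg h]
    rw [Finset.card_eq_zero, Finset.filter_eq_empty_iff]
    intro d _
    exact fun hd => h ((solvable_iff a t).mp ⟨d, hd⟩)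

lemma pow2_dvd_iff {i j : ℕ} : (2:ℕ)^i ∣ 2^j ↔ i ≤ j :=
  Nat.pow_dvd_pow_iff_le_right one_lt_two

lemma gcd_pow2_succ (j x : ℕ) :
    Nat.gcd (2^(j+1)) x = Nat.gcd (2^j) x + if 2^(j+1) ∣ x then 2^j else 0 := by
  by_cases h : (2:ℕ)^(j+1) ∣ x
  · rw [if_pos h, Nat.gcd_eq_left h,
      Nat.gcd_eq_left (dvd_trans (pow2_dvd_iff.mpr (Nat.le_succ j)) h)]
    ring
  · rw [if_neg h, add_zero]
    apply Nat.dvd_antisymm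
    · obtain ⟨i, hi, he⟩ := (Nat.dvd_prime_pow Nat.prime_two).mp
        (Nat.gcd_dvd_left (2^(j+1)) x)
      have hij : i ≤ j := by
        by_contra hc
        exact h (dvd_trans (pow2_dvd_iff.mpr (by omega)) (he ▸ Nat.gcd_dvd_right (2^(j+1)) x))
      exact Nat.dvd_gcd (he ▸ pow2_dvd_iff.mpr hij) (Nat.gcd_dvd_right _ _)
    · exact Nat.dvd_gcd (dvd_trans (Nat.gcd_dvd_left _ _) (pow2_dvd_iff.mpr (Nat.le_succ j)))
        (Nat.gcd_dvd_right _ _)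

lemma ite_gcd_pow2 {j k x : ℕ} (hjk : j < k) :
    (if Nat.gcd (2^k) x ∣ 2^j then Nat.gcd (2^k) x else 0)
      + (if 2^(j+1) ∣ x then 2^j else 0) = Nat.gcd (2^j) x := by
  by_cases h : (2:ℕ)^(j+1) ∣ x
  · rw [if_pos h, Nat.gcd_eq_left (dvd_trans (pow2_dvd_iff.mpr (Nat.le_succ j)) h)]
    have h2 : (2:ℕ)^(j+1) ∣ Nat.gcd (2^k) x := Nat.dvd_gcd (pow2_dvd_iff.mpr hjk) h
    rw [if_neg (fun hc => absurd (pow2_dvd_iff.mp (h2.trans hc)) (by omega))]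
    rw [zero_add]
  · rw [if_neg h, add_zero]
    obtain ⟨i, hi, he⟩ := (Nat.dvd_prime_pow Nat.prime_two).mp (Nat.gcd_dvd_left (2^k) x)
    have hij : i ≤ j := by
      by_contra hc
      exact h (dvd_trans (pow2_dvd_iff.mpr (by omega)) (he ▸ Nat.gcd_dvd_right (2^k) x))
    rw [if_pos (he ▸ pow2_dvd_iff.mpr hij)]
    apply Nat.dvd_antisymm
    · exact Nat.dvd_gcd (he ▸ pow2_dvd_iff.mpr hij) (Nat.gcd_dvd_right _ _)
    · exact Nat.dvd_gcd (dvd_trans (Nat.gcd_dvd_left _ _) (pow2_dvd_iff.mpr (le_of_lt hjk)))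
        (Nat.gcd_dvd_right _ _)

lemma gcd_pow2_eq_iff {j k x : ℕ} (hjk : j < k) :
    Nat.gcd (2^k) x = 2^j ↔ 2^j ∣ x ∧ ¬ 2^(j+1) ∣ x := by
  constructor
  · intro he
    refine ⟨he ▸ Nat.gcd_dvd_right (2^k) x, fun hc => ?_⟩
    have : (2:ℕ)^(j+1) ∣ 2^j := he ▸ Nat.dvd_gcd (pow2_dvd_iff.mpr hjk) hc
    exact absurd (pow2_dvd_iff.mp this) (by omega)
  · rintro ⟨h1, h2⟩
    obtain ⟨i, hi, he⟩ := (Nat.dvd_prime_pow Nat.prime_two).mp (Nat.gcd_dvd_left (2^k) x)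
    have hij : i ≤ j := by
      by_contra hc
      exact h2 (dvd_trans (pow2_dvd_iff.mpr (by omega)) (he ▸ Nat.gcd_dvd_right (2^k) x))
    have hji : (2:ℕ)^j ∣ Nat.gcd (2^k) x := Nat.dvd_gcd (pow2_dvd_iff.mpr hjk.le) h1
    rw [he] at hji ⊢
    exact Nat.dvd_antisymm (pow2_dvd_iff.mpr hij) hji

section Pow2

variable {k : ℕ}

lemma D_card (hk : 0 < k) {i : ℕ} (hi : i ≤ k) :
    haveI : NeZero ((2:ℕ)^k) := ⟨by positivity⟩
    ((univ : Finset (ZMod (2^k))).filter fun x => 2^i ∣ x.val).card = 2^(k-i) := by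
  haveI : NeZero ((2:ℕ)^k) := ⟨by positivity⟩
  rw [count_dvd_val (pow2_dvd_iff.mpr hi) (by positivity)]
  rw [Nat.pow_div hi (by norm_num)]

lemma sum_gcd (hk : 0 < k) : ∀ j ≤ k,
    haveI : NeZero ((2:ℕ)^k) := ⟨by positivity⟩
    (∑ a : ZMod (2^k), Nat.gcd (2^j) a.val) = 2^k + j * 2^(k-1) := by
  haveI : NeZero ((2:ℕ)^k) := ⟨by positivity⟩
  intro j
  induction j with
  | zero =>
    intro _
    simp [Nat.gcd_one_left, Finset.card_univ, ZMod.card]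
  | succ j ih =>
    intro hj
    have hsum : (∑ a : ZMod (2^k), Nat.gcd (2^(j+1)) a.val)
        = (∑ a : ZMod (2^k), Nat.gcd (2^j) a.val)
          + ∑ a : ZMod (2^k), (if 2^(j+1) ∣ a.val then 2^j else 0) := by
      rw [← Finset.sum_add_distrib]
      exact Finset.sum_congr rfl fun a _ => gcd_pow2_succ j a.val
    rw [hsum, ih (by omega)]
    have hite : (∑ a : ZMod (2^k), (if 2^(j+1) ∣ a.val then (2:ℕ)^j else 0))
        = ((univ : Finset (ZMod (2^k))).filter fun a => 2^(j+1) ∣ a.val).card * 2^j := by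
      rw [← Finset.sum_filter, Finset.sum_const, smul_eq_mul]
    rw [hite, D_card hk hj]
    have h1 : (2:ℕ)^(k-(j+1)) * 2^j = 2^(k-1) := by
      rw [← pow_add]
      congr 1
      omega
    rw [h1]
    ring

lemma N_sum [NeZero ((2:ℕ)^k)] (t : ZMod (2^k)) :
    ((univ : Finset (ZMod (2^k) × ZMod (2^k))).filter fun p => p.1 * p.2 = t).card
      = ∑ a : ZMod (2^k), (if Nat.gcd (2^k) a.val ∣ t.val then Nat.gcd (2^k) a.val else 0) := by
  rw [Finset.card_eq_sum_card_fiberwise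
    (f := Prod.fst) (t := (univ : Finset (ZMod (2^k)))) (fun x _ => mem_univ _)]
  apply Finset.sum_congr rfl
  intro a _
  rw [← fiber_card a t]
  refine Finset.card_bij' (fun p _ => p.2) (fun d _ => (a, d)) ?_ ?_ ?_ ?_
  · intro p hp
    simp only [mem_filter, mem_univ, true_and] at hp ⊢
    rw [← hp.2]; exact hp.1
  · intro d hd
    simp only [mem_filter, mem_univ, true_and] at hd ⊢
    exact ⟨hd, trivial⟩
  · intro p hp
    simp only [mem_filter, mem_univ, true_and] at hp
    show (a, p.2) = p
    rw [← hp.2]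
  · intro d hd
    rfl

lemma N_val_lt (hk : 0 < k) [NeZero ((2:ℕ)^k)] {j : ℕ} (hjk : j < k) (t : ZMod (2^k))
    (ht : Nat.gcd (2^k) t.val = 2^j) :
    ((univ : Finset (ZMod (2^k) × ZMod (2^k))).filter fun p => p.1 * p.2 = t).card
      = (j+1) * 2^(k-1) := by
  rw [N_sum t]
  have hcond : ∀ a : ZMod (2^k),
      (Nat.gcd (2^k) a.val ∣ t.val ↔ Nat.gcd (2^k) a.val ∣ 2^j) := by
    intro a
    constructor
    · intro h
      exact ht ▸ Nat.dvd_gcd (Nat.gcd_dvd_left _ _) h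
    · intro h
      exact h.trans (ht ▸ Nat.gcd_dvd_right (2^k) t.val)
  have hstep : (∑ a : ZMod (2^k), (if Nat.gcd (2^k) a.val ∣ t.val then Nat.gcd (2^k) a.val else 0))
      + ∑ a : ZMod (2^k), (if 2^(j+1) ∣ a.val then (2:ℕ)^j else 0)
      = ∑ a : ZMod (2^k), Nat.gcd (2^j) a.val := by
    rw [← Finset.sum_add_distrib]
    apply Finset.sum_congr rfl
    intro a _
    rw [if_congr (hcond a) rfl rfl]
    exact ite_gcd_pow2 hjk
  have hite : (∑ a : ZMod (2^k), (if 2^(j+1) ∣ a.val then (2:ℕ)^j else 0))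
      = 2^(k-(j+1)) * 2^j := by
    rw [← Finset.sum_filter, Finset.sum_const, smul_eq_mul, D_card hk hjk]
  rw [sum_gcd hk j hjk.le, hite] at hstep
  have h1 : (2:ℕ)^(k-(j+1)) * 2^j = 2^(k-1) := by
    rw [← pow_add]; congr 1; omega
  have h2 : (2:ℕ)^k = 2 * 2^(k-1) := by
    rw [← pow_succ']; congr 1; omega
  rw [h1] at hstep
  have h3 : 2^k + j * 2^(k-1) = (j+1) * 2^(k-1) + 2^(k-1) := by rw [h2]; ring
  exact Nat.add_right_cancel (hstep.trans h3)

lemma N_val_zero (hk : 0 < k) [NeZero ((2:ℕ)^k)] :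
    ((univ : Finset (ZMod (2^k) × ZMod (2^k))).filter fun p => p.1 * p.2 = 0).card
      = 2^k + k * 2^(k-1) := by
  rw [N_sum 0]
  have : ∀ a : ZMod (2^k), (if Nat.gcd (2^k) a.val ∣ (0 : ZMod (2^k)).val
      then Nat.gcd (2^k) a.val else 0) = Nat.gcd (2^k) a.val := by
    intro a
    rw [if_pos]
    rw [ZMod.val_zero]
    exact Dvd.intro 0 rfl
  rw [Finset.sum_congr rfl (fun a _ => this a)]
  exact sum_gcd hk k le_rfl

lemma sq_fiber_sum {α β : Type*} [Fintype α] [Fintype β] [DecidableEq α] [DecidableEq β]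
    (g : α → β) :
    ((univ : Finset (α × α)).filter fun x => g x.1 = g x.2).card
      = ∑ t : β, ((univ : Finset α).filter fun y => g y = t).card ^ 2 := by
  rw [Finset.card_eq_sum_card_fiberwise
    (f := fun x : α × α => g x.1) (t := (univ : Finset β)) (fun x _ => mem_univ _)]
  apply Finset.sum_congr rfl
  intro t _
  have he : (filter (fun x : α × α => g x.1 = t) (filter (fun x => g x.1 = g x.2) univ))
      = ((univ : Finset α).filter fun y => g y = t) ×ˢ ((univ : Finset α).filter fun y => g y = t) := by
    ext x
    simp only [mem_filter, mem_univ, true_and, Finset.mem_product]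
    constructor
    · rintro ⟨h1, h2⟩
      exact ⟨h2, h1 ▸ h2⟩
    · rintro ⟨h1, h2⟩
      exact ⟨h1.trans h2.symm, h1⟩
  rw [he, Finset.card_product, sq]

lemma sum_T (m : ℕ) :
    (∑ j ∈ Finset.range (m+1), (j+1)^2 * 2^(m-j)) + (m^2+6*m+11) = 6 * 2^(m+1) := by
  induction m with
  | zero => decide
  | succ m ih =>
    rw [Finset.sum_range_succ]
    have hpt : ∀ j ∈ Finset.range (m+1), (j+1)^2 * 2^(m+1-j) = 2 * ((j+1)^2 * 2^(m-j)) := by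
      intro j hj
      simp only [Finset.mem_range] at hj
      have : m+1-j = (m-j)+1 := by omega
      rw [this, pow_succ]
      ring
    rw [Finset.sum_congr rfl hpt, ← Finset.mul_sum]
    have h2 : (2:ℕ)^(m+2) = 2 * 2^(m+1) := by ring
    have hs1 : ((m+1)+1)^2 * 2^(m+1-(m+1)) = m^2+4*m+4 := by
      have : m+1-(m+1) = 0 := by omega
      rw [this]; ring
    rw [hs1, h2]
    have he1 : ((m+1)^2+6*(m+1)+11) = m^2+8*m+18 := by ring
    rw [he1]
    omega

theorem count_singular_matrices (k : ℕ) (hk : 1 ≤ k) :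
    Nat.card {M : Matrix (Fin 2) (Fin 2) (ZMod (2 ^ k)) | M.det = 0}
      = 3 * 2 ^ (3 * k - 1) - 2 ^ (2 * k - 1) := by
  obtain ⟨m, rfl⟩ : ∃ m, k = m + 1 := ⟨k - 1, by omega⟩
  haveI : NeZero ((2:ℕ)^(m+1)) := ⟨by positivity⟩
  have hk0 : 0 < m + 1 := Nat.succ_pos m
  let R := ZMod (2^(m+1))
  -- Step 1: Nat.card to Finset.card
  have step1 : Nat.card {M : Matrix (Fin 2) (Fin 2) R | M.det = 0}
      = ((univ : Finset (Matrix (Fin 2) (Fin 2) R)).filter fun M => M.det = 0).card := by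
    rw [Nat.card_eq_fintype_card]
    exact Fintype.card_subtype _
  -- Step 2: matrices to pairs of pairs
  have step2 : ((univ : Finset (Matrix (Fin 2) (Fin 2) R)).filter fun M => M.det = 0).card
      = ((univ : Finset ((R × R) × (R × R))).filter
          fun x => x.1.1 * x.1.2 = x.2.1 * x.2.2).card := by
    refine Finset.card_bij' (fun M _ => ((M 0 0, M 1 1), (M 0 1, M 1 0)))
      (fun x _ => !![x.1.1, x.2.1; x.2.2, x.1.2]) ?_ ?_ ?_ ?_
    · intro M hM
      simp only [mem_filter, mem_univ, true_and, Matrix.det_fin_two] at hM ⊢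
      exact sub_eq_zero.mp hM
    · intro x hx
      simp only [mem_filter, mem_univ, true_and] at hx ⊢
      rw [Matrix.det_fin_two_of, sub_eq_zero]
      exact hx
    · intro M hM
      exact (Matrix.eta_fin_two M).symm
    · intro x hx
      obtain ⟨⟨a, d⟩, ⟨b, c⟩⟩ := x
      simp
  -- Step 3: fiber sum over products
  have step3 : ((univ : Finset ((R × R) × (R × R))).filter
        fun x => x.1.1 * x.1.2 = x.2.1 * x.2.2).card
      = ∑ t : R, ((univ : Finset (R × R)).filter fun p => p.1 * p.2 = t).card ^ 2 :=
    sq_fiber_sum (fun p : R × R => p.1 * p.2)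
  rw [step1, step2, step3]
  -- Step 4: partition the t-sum by the 2-adic valuation of gcd
  have hgcd : ∀ t : R, Nat.gcd (2^(m+1)) t.val
      = 2 ^ (Nat.log 2 (Nat.gcd (2^(m+1)) t.val))
      ∧ Nat.log 2 (Nat.gcd (2^(m+1)) t.val) ≤ m + 1 := by
    intro t
    obtain ⟨i, hi, he⟩ := (Nat.dvd_prime_pow Nat.prime_two).mp
      (Nat.gcd_dvd_left (2^(m+1)) t.val)
    rw [he, Nat.log_pow one_lt_two]
    exact ⟨rfl, hi⟩
  have step4 : (∑ t : R, ((univ : Finset (R × R)).filter fun p => p.1 * p.2 = t).card ^ 2)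
      = ∑ j ∈ Finset.range (m+2), ∑ t ∈ (univ : Finset R).filter
          (fun t => Nat.log 2 (Nat.gcd (2^(m+1)) t.val) = j),
          ((univ : Finset (R × R)).filter fun p => p.1 * p.2 = t).card ^ 2 :=
    by
    refine (Finset.sum_fiberwise_of_maps_to ?_ _).symm
    intro t _
    exact Finset.mem_range.mpr (by have := (hgcd t).2; omega)
  rw [step4, Finset.sum_range_succ]
  -- the j = m+1 fiber is {0}
  have fib_top : (univ : Finset R).filter
      (fun t => Nat.log 2 (Nat.gcd (2^(m+1)) t.val) = m+1) = {0} := by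
    ext t
    simp only [mem_filter, mem_univ, true_and, Finset.mem_singleton]
    constructor
    · intro h
      have h1 : (2:ℕ)^(m+1) ∣ t.val := by
        have h0 := (hgcd t).1
        rw [h] at h0
        exact (dvd_of_eq h0.symm).trans (Nat.gcd_dvd_right (2^(m+1)) t.val)
      have h2 : t.val < 2^(m+1) := ZMod.val_lt t
      have h3 : t.val = 0 := Nat.eq_zero_of_dvd_of_lt h1 h2
      exact (ZMod.val_eq_zero t).mp h3
    · intro h
      rw [h]
      rw [ZMod.val_zero, Nat.gcd_zero_right, Nat.log_pow one_lt_two]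
  rw [fib_top, Finset.sum_singleton]
  have hNzero := N_val_zero (k := m+1) hk0
  rw [hNzero]
  -- inner sums for j < m+1
  have inner : ∀ j ∈ Finset.range (m+1),
      (∑ t ∈ (univ : Finset R).filter
          (fun t => Nat.log 2 (Nat.gcd (2^(m+1)) t.val) = j),
        ((univ : Finset (R × R)).filter fun p => p.1 * p.2 = t).card ^ 2)
      = ((j+1) * 2^(m+1-1))^2 * 2^(m-j) := by
    intro j hj
    simp only [Finset.mem_range] at hj
    have hconst : ∀ t ∈ (univ : Finset R).filter
        (fun t => Nat.log 2 (Nat.gcd (2^(m+1)) t.val) = j),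
        ((univ : Finset (R × R)).filter fun p => p.1 * p.2 = t).card ^ 2
          = ((j+1) * 2^(m+1-1))^2 := by
      intro t ht
      simp only [mem_filter, mem_univ, true_and] at ht
      have hgt : Nat.gcd (2^(m+1)) t.val = 2^j := by
        have h0 := (hgcd t).1
        rw [ht] at h0
        exact h0
      rw [N_val_lt hk0 hj t hgt]
    rw [Finset.sum_congr rfl hconst, Finset.sum_const, smul_eq_mul, mul_comm]
    congr 1
    -- card of the fiber
    have hfe : (univ : Finset R).filter
        (fun t => Nat.log 2 (Nat.gcd (2^(m+1)) t.val) = j)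
        = (univ : Finset R).filter (fun t => 2^j ∣ t.val)
          \ (univ : Finset R).filter (fun t => 2^(j+1) ∣ t.val) := by
      ext t
      simp only [mem_filter, mem_univ, true_and, Finset.mem_sdiff]
      constructor
      · intro h
        have h0 := (hgcd t).1
        rw [h] at h0
        exact (gcd_pow2_eq_iff hj).mp h0
      · intro h
        rw [(gcd_pow2_eq_iff hj).mpr h, Nat.log_pow one_lt_two]
    have hsub : (univ : Finset R).filter (fun t => 2^(j+1) ∣ t.val)
        ⊆ (univ : Finset R).filter (fun t => 2^j ∣ t.val) := by
      intro t ht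
      simp only [mem_filter, mem_univ, true_and] at ht ⊢
      exact (pow_dvd_pow 2 (Nat.le_succ j)).trans ht
    rw [hfe, Finset.card_sdiff_of_subset hsub, D_card hk0 (by omega), D_card hk0 (by omega)]
    have e1 : m+1-j = (m-j)+1 := by omega
    have e2 : m+1-(j+1) = m-j := by omega
    rw [e1, e2, pow_succ]
    generalize (2:ℕ)^(m-j) = X
    omega
  rw [Finset.sum_congr rfl inner]
  -- final arithmetic
  have e1 : m+1-1 = m := by omega
  have e2 : 3*(m+1)-1 = 3*m+2 := by omega
  have e3 : 2*(m+1)-1 = 2*m+1 := by omega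
  rw [e1, e2, e3]
  have hpt : ∀ j ∈ Finset.range (m+1),
      ((j+1) * 2^m)^2 * 2^(m-j) = ((j+1)^2 * 2^(m-j)) * 2^(2*m) := by
    intro j _
    have h2 : (2:ℕ)^(2*m) = 2^m * 2^m := by rw [two_mul, pow_add]
    rw [h2]
    ring
  rw [Finset.sum_congr rfl hpt, ← Finset.sum_mul]
  have hsq : ((2:ℕ)^(m+1) + (m+1)*2^m)^2 = (m+3)^2 * 2^(2*m) := by
    have h1 : (2:ℕ)^(m+1) = 2 * 2^m := by rw [pow_succ']
    have h2 : (2:ℕ)^(2*m) = 2^m * 2^m := by rw [two_mul, pow_add]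
    rw [h1, h2]
    ring
  rw [hsq]
  refine (Nat.sub_eq_of_eq_add ?_).symm
  have hT := sum_T m
  have hA : (2:ℕ)^(3*m+2) = 2^(m+1) * 2^(2*m) * 2 := by
    rw [← pow_add, ← pow_succ]
    congr 1
    omega
  have hB : (2:ℕ)^(2*m+1) = 2^(2*m) * 2 := pow_succ 2 (2*m)
  rw [hA, hB]
  have hC : 3 * (2^(m+1) * 2^(2*m) * 2) = (6 * 2^(m+1)) * 2^(2*m) := by ring
  rw [hC, ← hT]
  ring
end Pow2
end
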